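/- arXiv:2509.08473 — 6 statements merged into one kernel-verified Lean document; each statement's English description precedes it below -/
import Mathlib

section
/- Let (𝕊,ℓ,∂) be a differential pre-logarithmic Hahn field satisfying condition (⋆) with respect to x ∈ 𝕊∖{0}, and assume x' = 1. Let 𝕋 = K⟦𝔑⟧, △ : 𝕊 → 𝕋 a strongly linear morphism of ordered rings, δ ∈ 𝕋 with δ ≺ △(x), and let d : 𝕋 → 𝕋 be a strongly linear derivation such that d(△(s)) = d(△(x))·△(s') for all s ∈ 𝕊. Then for all s ∈ 𝕊_{△,δ} := K⟦{m ∈ 𝔐 : △(m†)·δ ≺ 1}⟧ we have d(T_δ(△)(s)) = d(T_δ(△)(x))·T_δ(△)(s'), where T_δ(△)(s) := Σ_{k∈ℕ}(△(s^{(k)})/k!)·δ^k. -/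
open HahnSeries
open scoped Classical

noncomputable section

namespace Art

/-! ### Summability and dominance for Hahn series.

Monomial groups are written additively as exponent groups; the paper's ordering `≺` of
monomials is the *reverse* of the ordering of exponents, so that the dominant monomial of a
series corresponds to the *minimum* of its (partially well-ordered) support, and the paper's
"well-based" sets of monomials are exactly the `Set.IsPWO` sets of exponents. -/

section Basic

variable {Γ : Type} [PartialOrder Γ] {K : Type} [AddCommMonoid K]

/-- A family of Hahn series is summable: the union of supports is well-based (partially
well-ordered for the exponent order, i.e. Noetherian for the reverse monomial order) and each
monomial lies in the support of only finitely many members. -/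
def SummableF {ι : Type} (s : ι → HahnSeries Γ K) : Prop :=
  (⋃ i, (s i).support).IsPWO ∧ ∀ g : Γ, {i | (s i).coeff g ≠ 0}.Finite

/-- The sum of a summable family (junk value `0` if the family is not summable). -/
def hsum {ι : Type} (s : ι → HahnSeries Γ K) : HahnSeries Γ K :=
  if h : SummableF s then (HahnSeries.SummableFamily.mk s h.1 h.2).hsum else 0

/-- `dLE s t` is the dominance relation `s ≼ t`: every monomial of `s` is `≼` some monomial
of `t` (in exponents: `∀ g ∈ supp s, ∃ h ∈ supp t, h ≤ g`). -/
def dLE (s t : HahnSeries Γ K) : Prop := ∀ g ∈ s.support, ∃ h ∈ t.support, h ≤ g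

/-- `dLT s t` is the strict dominance relation `s ≺ t`. -/
def dLT (s t : HahnSeries Γ K) : Prop := t ≠ 0 ∧ ∀ g ∈ s.support, ∃ h ∈ t.support, h < g

/-- `dEq s t` is the asymptotic equivalence `s ≍ t`. -/
def dEq (s t : HahnSeries Γ K) : Prop := dLE s t ∧ dLE t s

/-- `t` is a truncation of `s`: `t` is the restriction of `s` to an initial segment of the
monomial ordering containing the dominant monomials, i.e. a downward closed set of exponents. -/
def IsTrunc (t s : HahnSeries Γ K) : Prop :=
  ∃ J : Set Γ, (∀ ⦃g h : Γ⦄, g ∈ J → h ≤ g → h ∈ J) ∧ ∀ g, t.coeff g = J.indicator s.coeff g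

end Basic

section Mono

variable {Γ : Type} [PartialOrder Γ]

/-- The monomial with exponent `g`, as a Hahn series. -/
def mono (K : Type) [Zero K] [One K] (g : Γ) : HahnSeries Γ K := HahnSeries.single g 1

end Mono

section SL

variable {Γ Γ' : Type} [PartialOrder Γ] [PartialOrder Γ'] {K : Type} [Semiring K]

/-- A map between fields/algebras of Hahn series over `K` is strongly linear if it is
`K`-linear and carries summable families to summable families, commuting with infinite sums. -/
def StronglyLinear (Φ : HahnSeries Γ K → HahnSeries Γ' K) : Prop :=
  (∀ a b, Φ (a + b) = Φ a + Φ b) ∧ (∀ (c : K) (a), Φ (c • a) = c • Φ a) ∧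
    ∀ (ι : Type) (s : ι → HahnSeries Γ K), SummableF s →
      SummableF (fun i => Φ (s i)) ∧ Φ (hsum s) = hsum (fun i => Φ (s i))

end SL

section Ordered

variable {Γ : Type} [AddCommGroup Γ] [LinearOrder Γ] [IsOrderedAddMonoid Γ] {K : Type} [Field K] [LinearOrder K] [IsStrictOrderedRing K]

/-- The order relation on the ordered field of Hahn series: `0 < s` iff the leading
coefficient (the coefficient of the dominant monomial) is positive. -/
def sLT (s t : HahnSeries Γ K) : Prop := 0 < (t - s).leadingCoeff

def sLE (s t : HahnSeries Γ K) : Prop := s = t ∨ sLT s t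

end Ordered

section Der

variable {Γ : Type} [AddCommGroup Γ] [LinearOrder Γ] [IsOrderedAddMonoid Γ] {K : Type} [Field K]

/-- `m† = m'/m`, in exponent form: the logarithmic derivative of the monomial `g`. -/
def dag (D : HahnSeries Γ K → HahnSeries Γ K) (g : Γ) : HahnSeries Γ K :=
  D (mono K g) * (mono K g)⁻¹

/-- Condition (⋆) with respect to `x`: for every monomial `m`, either `m† ≼ x⁻¹` and every
`n ∈ supp m'` has `n† ≼ x⁻¹`, or `m† ≻ x⁻¹` and every `n ∈ supp m'` has `n† ≍ m†`. -/
def SpecCond (D : HahnSeries Γ K → HahnSeries Γ K) (x : HahnSeries Γ K) : Prop :=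
  ∀ g : Γ,
    (dLE (dag D g) x⁻¹ ∧ ∀ h ∈ (D (mono K g)).support, dLE (dag D h) x⁻¹) ∨
    (dLT x⁻¹ (dag D g) ∧ ∀ h ∈ (D (mono K g)).support, dEq (dag D h) (dag D g))

end Der

/-- A differential pre-logarithmic Hahn field structure on `K⟦Γ⟧`: a strongly linear
derivation `D` together with a pre-logarithm `ℓ`, an embedding of the ordered group of
monomials into `(K⟦Γ⟧, +, 0, <)` (the monomial order being the reverse exponent order),
whose image is closed under truncation, and such that `D (ℓ m) = m† = m'/m`. -/
structure PreLogField (Γ K : Type) [AddCommGroup Γ] [LinearOrder Γ] [IsOrderedAddMonoid Γ] [Field K] [LinearOrder K] [IsStrictOrderedRing K] where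
  D : HahnSeries Γ K → HahnSeries Γ K
  ℓ : Γ → HahnSeries Γ K
  D_sl : StronglyLinear D
  D_leibniz : ∀ a b, D (a * b) = D a * b + a * D b
  ℓ_add : ∀ g h : Γ, ℓ (g + h) = ℓ g + ℓ h
  ℓ_mono : ∀ g h : Γ, g < h → sLT (ℓ h) (ℓ g)
  ℓ_trunc : ∀ (g : Γ) (t : HahnSeries Γ K), IsTrunc t (ℓ g) → ∃ h : Γ, t = ℓ h
  ℓ_dag : ∀ g : Γ, D (ℓ g) = dag D g


section Taylor

variable {Γ Γ' : Type} [AddCommGroup Γ] [LinearOrder Γ] [IsOrderedAddMonoid Γ] [AddCommGroup Γ'] [LinearOrder Γ'] [IsOrderedAddMonoid Γ']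
  {K : Type} [Field K]

/-- The convergence locus `Conv_△(P)` of a power series with coefficients `P k ∈ 𝕊`,
relative to a strongly linear map `△ : 𝕊 → 𝕋`. -/
def ConvD (Δ : HahnSeries Γ K → HahnSeries Γ' K) (P : ℕ → HahnSeries Γ K) :
    Set (HahnSeries Γ' K) :=
  {ε | SummableF fun k : ℕ => Δ (P k) * ε ^ k}

/-- The coefficients `f^{(k)}/k!` of the Taylor series of `f`. -/
def taylorCoeffs (D : HahnSeries Γ K → HahnSeries Γ K) (f : HahnSeries Γ K) :
    ℕ → HahnSeries Γ K :=
  fun k => (k.factorial : K)⁻¹ • D^[k] f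

/-- The set of monomials `𝔐_{△,δ} = {m : △(m†)·δ ≺ 1}` (in exponent form). -/
def Mdag (D : HahnSeries Γ K → HahnSeries Γ K) (Δ : HahnSeries Γ K → HahnSeries Γ' K)
    (δ : HahnSeries Γ' K) : Set Γ :=
  {g | dLT (Δ (dag D g) * δ) 1}

/-- The Taylor deformation `T_δ(△) : s ↦ Σ_k (△(s^{(k)})/k!)·δ^k`. -/
def Tdef (D : HahnSeries Γ K → HahnSeries Γ K) (Δ : HahnSeries Γ K → HahnSeries Γ' K)
    (δ : HahnSeries Γ' K) (s : HahnSeries Γ K) : HahnSeries Γ' K :=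
  hsum fun k : ℕ => (k.factorial : K)⁻¹ • (Δ (D^[k] s) * δ ^ k)

end Taylor
section Cut

variable {Γ : Type} [AddCommGroup Γ] [LinearOrder Γ] [IsOrderedAddMonoid Γ] {K : Type} [Field K]



/-- `S` is a final segment of the monomial ordering `≺`, i.e. a downward closed set of
exponents. -/
def FinalSeg (S : Set Γ) : Prop := ∀ ⦃u v : Γ⦄, u ∈ S → v ≤ u → v ∈ S

/-- The order `mX^k ≺_𝔖 nX^{k'}` on the monoid `𝔐·X^ℕ`, in exponent form on `Γ × ℕ`:
either `k = k'` and `m ≺ n` (i.e. the exponent of `n` is less than that of `m`), or `k > k'`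
and `m·n⁻¹ ≼ u^{-(k-k')}` for some `u ∈ S`. -/
def cutLT (S : Set Γ) (p q : Γ × ℕ) : Prop :=
  (p.2 = q.2 ∧ q.1 < p.1) ∨
    (q.2 < p.2 ∧ ∃ u ∈ S, ((q.2 : ℤ) - (p.2 : ℤ)) • u ≤ p.1 - q.1)

/-- A subset of `𝔐·X^ℕ` is well-based (Noetherian for the reverse order `≻_𝔖`): every
sequence in it admits `i < j` with the `j`-th term `≼_𝔖` the `i`-th term. -/
def CutWB (S : Set Γ) (A : Set (Γ × ℕ)) : Prop :=
  ∀ f : ℕ → Γ × ℕ, (∀ n, f n ∈ A) → ∃ i j : ℕ, i < j ∧ (f j = f i ∨ cutLT S (f j) (f i))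

/-- The strictly positive cone `(𝔐×X^ℤ)^{≺,𝔖}` on `𝔐·X^ℤ`, in exponent form on `Γ × ℤ`:
`{mX^0 : m ≺ 1} ∪ {mX^k : k > 0 ∧ ∃ u ∈ 𝔖, m ≼ u^{-k}}`. -/
def cutCone (S : Set Γ) : Set (Γ × ℤ) :=
  {p | (p.2 = 0 ∧ 0 < p.1) ∨ (0 < p.2 ∧ ∃ u ∈ S, (-p.2) • u ≤ p.1)}

/-- A power series with Hahn-series coefficients `P k` belongs to the cut algebra
`𝕊⟦X⟧_𝔖` iff its total support is partially well-ordered for `≻_𝔖`. -/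
def InCut (S : Set Γ) (P : ℕ → HahnSeries Γ K) : Prop :=
  CutWB S {q : Γ × ℕ | q.1 ∈ (P q.2).support}

/-- An element of a cut algebra `K⟦𝔐 ×_𝔖 X^ℕ⟧`, presented as a coefficient function
`Γ × ℕ → K`, with monomials constrained to a subset `G ⊆ Γ`. -/
def InCutAlg (S G : Set Γ) (P : Γ × ℕ → K) : Prop :=
  CutWB S (Function.support P) ∧ ∀ q ∈ Function.support P, Prod.fst q ∈ G

/-- Summability of a family of elements of a cut algebra. -/
def CutSummable {ι : Type} (S : Set Γ) (F : ι → Γ × ℕ → K) : Prop :=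
  CutWB S (⋃ i, Function.support (F i)) ∧ ∀ q : Γ × ℕ, {i | F i q ≠ 0}.Finite

/-- The coefficientwise sum of a family of elements of a cut algebra. -/
def cutSum {ι : Type} (F : ι → Γ × ℕ → K) : Γ × ℕ → K := fun q => ∑ᶠ i, F i q

/-- The Cauchy convolution product on coefficient functions `Γ × ℕ → K`. -/
def cutConv (P Q : Γ × ℕ → K) : Γ × ℕ → K :=
  fun q => ∑ᶠ (p : (Γ × ℕ) × (Γ × ℕ)) (_ : p.1 + p.2 = q), P p.1 * Q p.2

/-- The subgroup `𝔖^{-‡} = {m : m = 1 ∨ 𝔡_{m†} ∈ 𝔖⁻¹}` of `𝔐`. -/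
def SdagInv (D : HahnSeries Γ K → HahnSeries Γ K) (S : Set Γ) : Set Γ :=
  {g | g = 0 ∨ (dag D g ≠ 0 ∧ -(dag D g).order ∈ S)}

/-- The operator `X·∂̄` on cut series: `mX^k ↦ m'·X^{k+1}`, extended coefficientwise. -/
def XDbar (D : HahnSeries Γ K → HahnSeries Γ K) (P : Γ × ℕ → K) : Γ × ℕ → K := fun q =>
  match q.2 with
  | 0 => 0
  | Nat.succ k => ∑ᶠ g : Γ, P (g, k) * (D (mono K g)).coeff q.1

/-- The Taylor map `s ↦ Σ_k (s^{(k)}/k!)·X^k` with values in cut series. -/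
def TaylorCut (D : HahnSeries Γ K → HahnSeries Γ K) (s : HahnSeries Γ K) : Γ × ℕ → K :=
  fun q => (q.2.factorial : K)⁻¹ * (D^[q.2] s).coeff q.1

end Cut

section PS

variable {Γ : Type} [AddCommGroup Γ] [LinearOrder Γ] [IsOrderedAddMonoid Γ] {K : Type} [Field K]

/-- The convergence locus of a power series with coefficients `P k` in `𝕊`. -/
def Conv (P : ℕ → HahnSeries Γ K) : Set (HahnSeries Γ K) :=
  {δ | SummableF fun k => P k * δ ^ k}

/-- Evaluation `P̃(δ)` of a power series at `δ` (junk value if not convergent). -/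
def evalPS (P : ℕ → HahnSeries Γ K) (δ : HahnSeries Γ K) : HahnSeries Γ K :=
  hsum fun k => P k * δ ^ k

/-- The formal derivative of a power series, `P' = Σ (k+1)·P_{k+1} X^k`. -/
def derivPS (P : ℕ → HahnSeries Γ K) : ℕ → HahnSeries Γ K :=
  fun k => ((k : K) + 1) • P (k + 1)

/-- Formal composition `P ∘ Q` of power series (for `Q` with zero constant term). -/
def compPS (P Q : ℕ → HahnSeries Γ K) : ℕ → HahnSeries Γ K :=
  fun k => ∑ n ∈ Finset.range (k + 1),
    P n * (PowerSeries.coeff (R := HahnSeries Γ K) k) ((PowerSeries.mk Q) ^ n)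

end PS


section ChainRuleAux

variable {Γ : Type} [AddCommGroup Γ] [LinearOrder Γ] [IsOrderedAddMonoid Γ] {K : Type} [Field K]

theorem summableF_of_family {ι : Type} (S : HahnSeries.SummableFamily Γ K ι) :
    SummableF (fun i => S i) :=
  ⟨S.isPWO_iUnion_support, fun g => S.finite_co_support g⟩

theorem hsum_eq_family {ι : Type} {s : ι → HahnSeries Γ K} (h : SummableF s)
    (S : HahnSeries.SummableFamily Γ K ι) (hS : ∀ i, S i = s i) : hsum s = S.hsum := by
  unfold hsum
  rw [dif_pos h]
  congr 1
  exact (HahnSeries.SummableFamily.ext hS).symm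

theorem summableF_tail {f : ℕ → HahnSeries Γ K} (h : SummableF f) :
    SummableF fun k => f (k + 1) := by
  refine ⟨h.1.mono (Set.iUnion_subset fun k =>
    Set.subset_iUnion_of_subset (k + 1) subset_rfl), fun g => ?_⟩
  have hs : {k : ℕ | (f (k + 1)).coeff g ≠ 0} ⊆
      Nat.succ ⁻¹' {k : ℕ | (f k).coeff g ≠ 0} := fun k hk => hk
  exact (Set.Finite.preimage (Set.injOn_of_injective Nat.succ_injective) (h.2 g)).subset hs

theorem summableF_head {f : ℕ → HahnSeries Γ K} (h : SummableF fun k => f (k + 1)) :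
    SummableF f := by
  constructor
  · refine ((f 0).isPWO_support.union h.1).mono (Set.iUnion_subset fun k g hg => ?_)
    cases k with
    | zero => exact Set.mem_union_left _ hg
    | succ k => exact Set.mem_union_right _ (Set.mem_iUnion.mpr ⟨k, hg⟩)
  · intro g
    refine (((h.2 g).image Nat.succ).insert 0).subset fun k hk => ?_
    cases k with
    | zero => exact Set.mem_insert _ _
    | succ k => exact Set.mem_insert_iff.mpr (Or.inr ⟨k, hk, rfl⟩)

theorem summableF_zero : SummableF (fun _ : ℕ => (0 : HahnSeries Γ K)) := by
  constructor
  · simpa using Set.isPWO_empty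
  · intro g; simp

theorem summableF_smulF {c : ℕ → K} {f : ℕ → HahnSeries Γ K} (h : SummableF f) :
    SummableF fun k => c k • f k := by
  constructor
  · refine h.1.mono (Set.iUnion_mono fun k g hg => ?_)
    simp only [HahnSeries.mem_support, HahnSeries.coeff_smul, smul_eq_mul] at hg ⊢
    exact fun h0 => hg (by rw [h0, mul_zero])
  · intro g
    refine (h.2 g).subset fun k hk => ?_
    simp only [Set.mem_setOf_eq, HahnSeries.coeff_smul, smul_eq_mul] at hk ⊢
    exact fun h0 => hk (by rw [h0, mul_zero])

theorem smul_mul_assoc' (c : K) (a b : HahnSeries Γ K) : (c • a) * b = c • (a * b) := by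
  rw [← HahnSeries.single_zero_mul_eq_smul, ← HahnSeries.single_zero_mul_eq_smul, mul_assoc]

theorem mul_smul_comm' (c : K) (a b : HahnSeries Γ K) : a * (c • b) = c • (a * b) := by
  rw [← HahnSeries.single_zero_mul_eq_smul, ← HahnSeries.single_zero_mul_eq_smul]
  exact mul_left_comm _ _ _

theorem summableF_mulF (x : HahnSeries Γ K) {ι : Type} {f : ι → HahnSeries Γ K}
    (h : SummableF f) :
    SummableF (fun i => x * f i) ∧ hsum (fun i => x * f i) = x * hsum f := by
  set S : HahnSeries.SummableFamily Γ K ι := ⟨f, h.1, h.2⟩ with hSdef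
  have happ : ∀ i, (x • S) i = x * f i := by
    intro i
    rw [HahnSeries.SummableFamily.smul_apply, HahnSeries.of_symm_smul_of_eq_mul]
    rfl
  have h1 : SummableF (fun i => x * f i) := by
    have h2 := summableF_of_family (x • S)
    simpa only [happ] using h2
  refine ⟨h1, ?_⟩
  rw [hsum_eq_family h1 (x • S) happ, HahnSeries.SummableFamily.hsum_smul,
    hsum_eq_family h S (fun i => rfl)]

theorem hsum_pair {f : ℕ → HahnSeries Γ K} (hf : ∀ k, f (k + 2) = 0) :
    SummableF f ∧ hsum f = f 0 + f 1 := by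
  have h2 : SummableF fun k : ℕ => f (k + 1 + 1) := by
    have hz : (fun k : ℕ => f (k + 1 + 1)) = fun _ => 0 := funext fun k => hf k
    rw [hz]; exact summableF_zero
  have h1 : SummableF fun k : ℕ => f (k + 1) := summableF_head h2
  have h0 : SummableF f := summableF_head h1
  refine ⟨h0, ?_⟩
  set S : HahnSeries.SummableFamily Γ K ℕ := ⟨f, h0.1, h0.2⟩ with hSdef
  rw [hsum_eq_family h0 S (fun i => rfl)]
  ext g
  rw [HahnSeries.SummableFamily.coeff_hsum_eq_sum_of_subset (t := {0, 1}) ?_]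
  · have h01 : (0 : ℕ) ≠ 1 := by decide
    rw [Finset.sum_pair h01]
    rfl
  · intro k hk
    simp only [Set.mem_setOf_eq] at hk
    match k with
    | 0 => simp
    | 1 => simp
    | (n + 2) =>
        exact absurd (show (S (n + 2)).coeff g = 0 by
          show (f (n + 2)).coeff g = 0
          rw [hf n]; rfl) hk

end ChainRuleAux

/-- **Theorem 5.5 (chain rule for Taylor deformations).** Assume `x' = 1`. If
`d : 𝕋 → 𝕋` is a strongly linear derivation with `d(△(s)) = d(△(x))·△(s')` for all
`s ∈ 𝕊`, then for all `s ∈ 𝕊_{△,δ}` one has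
`d(T_δ(△)(s)) = d(T_δ(△)(x))·T_δ(△)(s')`. -/
theorem statement3 {Γ Γ' K : Type} [AddCommGroup Γ] [LinearOrder Γ] [IsOrderedAddMonoid Γ]
    [AddCommGroup Γ'] [LinearOrder Γ'] [IsOrderedAddMonoid Γ'] [Field K] [LinearOrder K] [IsStrictOrderedRing K]
    (F : PreLogField Γ K) (x : HahnSeries Γ K) (hx : x ≠ 0) (hstar : SpecCond F.D x)
    (hx1 : F.D x = 1)
    (Δ : HahnSeries Γ K → HahnSeries Γ' K)
    (hΔsl : StronglyLinear Δ) (hΔmul : ∀ a b, Δ (a * b) = Δ a * Δ b) (hΔone : Δ 1 = 1)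
    (hΔmono : ∀ a, sLE 0 a → sLE 0 (Δ a))
    (δ : HahnSeries Γ' K) (hδx : dLT δ (Δ x))
    (d : HahnSeries Γ' K → HahnSeries Γ' K) (hd_sl : StronglyLinear d)
    (hd_leib : ∀ a b, d (a * b) = d a * b + a * d b)
    (hchain : ∀ s : HahnSeries Γ K, d (Δ s) = d (Δ x) * Δ (F.D s)) :
    ∀ s : HahnSeries Γ K, s.support ⊆ Mdag F.D Δ δ →
      d (Tdef F.D Δ δ s) = d (Tdef F.D Δ δ x) * Tdef F.D Δ δ (F.D s) := by
  intro s _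
  classical
  set A : ℕ → HahnSeries Γ' K :=
    fun k => (k.factorial : K)⁻¹ • (Δ (F.D^[k] s) * δ ^ k) with hAdef
  set B : ℕ → HahnSeries Γ' K :=
    fun k => (k.factorial : K)⁻¹ • (Δ (F.D^[k] (F.D s)) * δ ^ k) with hBdef
  have hTs : Tdef F.D Δ δ s = hsum A := rfl
  have hTds : Tdef F.D Δ δ (F.D s) = hsum B := rfl
  -- basic facts
  have hΔ0 : Δ 0 = 0 := by
    have h := hΔsl.1 0 0
    rw [add_zero] at h
    exact (add_eq_left.mp h.symm)
  have hd0 : d 0 = 0 := by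
    have h := hd_sl.1 0 0
    rw [add_zero] at h
    exact (add_eq_left.mp h.symm)
  have hD0 : F.D 0 = 0 := by
    have h := F.D_sl.1 0 0
    rw [add_zero] at h
    exact (add_eq_left.mp h.symm)
  have hd1 : d 1 = 0 := by
    have h := hd_leib 1 1
    rw [mul_one, mul_one, one_mul] at h
    exact (add_eq_left.mp h.symm)
  have hD1 : F.D 1 = 0 := by
    have h := F.D_leibniz 1 1
    rw [mul_one, mul_one, one_mul] at h
    exact (add_eq_left.mp h.symm)
  have hk1 : ∀ k : ℕ, ((k : K) + 1) ≠ 0 := by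
    intro k
    positivity
  have hfac : ∀ k : ℕ, (((k + 1).factorial : K))⁻¹ * ((k : K) + 1) = ((k.factorial : K))⁻¹ := by
    intro k
    have hkf : ((k.factorial : K)) ≠ 0 := Nat.cast_ne_zero.mpr k.factorial_ne_zero
    rw [Nat.factorial_succ]
    push_cast
    field_simp
  have hdpow : ∀ k : ℕ, d (δ ^ (k + 1)) = ((k : K) + 1) • (d δ * δ ^ k) := by
    intro k
    induction k with
    | zero => simp [hd1]
    | succ k ih =>
        have hp : δ ^ (k + 1 + 1) = δ * δ ^ (k + 1) := by ring
        rw [hp, hd_leib, ih, mul_smul_comm']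
        have h2 : δ * (d δ * δ ^ k) = d δ * δ ^ (k + 1) := by ring
        rw [h2, show (((k + 1 : ℕ) : K) + 1) • (d δ * δ ^ (k + 1))
            = ((k : K) + 1) • (d δ * δ ^ (k + 1)) + d δ * δ ^ (k + 1) by
          push_cast; rw [add_smul, one_smul], add_comm]
  by_cases hA : SummableF A
  · -- convergent case
    have hB : SummableF B := by
      by_cases hδ : δ = 0
      · apply summableF_head
        have hz : (fun k : ℕ => B (k + 1)) = fun _ => 0 := by
          funext k
          rw [hBdef]
          show (((k + 1).factorial : K))⁻¹ • (Δ (F.D^[k + 1] (F.D s)) * δ ^ (k + 1)) = 0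
          rw [hδ, zero_pow (Nat.succ_ne_zero k), mul_zero, smul_zero]
        rw [hz]; exact summableF_zero
      · have key : B = fun k : ℕ => ((k : K) + 1) • (δ⁻¹ * A (k + 1)) := by
          funext k
          rw [hAdef, hBdef]
          show (k.factorial : K)⁻¹ • (Δ (F.D^[k] (F.D s)) * δ ^ k)
            = ((k : K) + 1) •
              (δ⁻¹ * ((((k + 1).factorial : K))⁻¹ • (Δ (F.D^[k + 1] s) * δ ^ (k + 1))))
          rw [Function.iterate_succ_apply, mul_smul_comm', smul_smul,
            show ((k : K) + 1) * (((k + 1).factorial : K))⁻¹ = ((k.factorial : K))⁻¹ by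
              rw [← hfac k]; ring]
          congr 1
          rw [pow_succ, show δ⁻¹ * (Δ (F.D^[k] (F.D s)) * (δ ^ k * δ)) =
            Δ (F.D^[k] (F.D s)) * δ ^ k * (δ * δ⁻¹) by ring, mul_inv_cancel₀ hδ, mul_one]
        rw [key]
        exact summableF_smulF (summableF_mulF δ⁻¹ (summableF_tail hA)).1
    set SB : HahnSeries.SummableFamily Γ' K ℕ := ⟨B, hB.1, hB.2⟩ with hSB
    set emb : ℕ ↪ ℕ := ⟨Nat.succ, Nat.succ_injective⟩ with hembdef
    have hsmulapp : ∀ (c : HahnSeries Γ' K) (k : ℕ), (c • SB) k = c * B k := by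
      intro c k
      rw [HahnSeries.SummableFamily.smul_apply, HahnSeries.of_symm_smul_of_eq_mul]
      rfl
    have hDk : ∀ k : ℕ, F.D^[k + 2] x = 0 := by
      intro k
      induction k with
      | zero =>
          show F.D^[2] x = 0
          rw [show F.D^[2] x = F.D (F.D^[1] x) from Function.iterate_succ_apply' F.D 1 x,
            Function.iterate_one, hx1, hD1]
      | succ k ih =>
          rw [show F.D^[k + 1 + 2] x = F.D (F.D^[k + 2] x) from
            Function.iterate_succ_apply' F.D (k + 2) x, ih, hD0]
    have hTx : Tdef F.D Δ δ x = Δ x + δ := by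
      have hC : ∀ k : ℕ,
          (fun k : ℕ => (k.factorial : K)⁻¹ • (Δ (F.D^[k] x) * δ ^ k)) (k + 2) = 0 := by
        intro k
        show (((k + 2).factorial : K))⁻¹ • (Δ (F.D^[k + 2] x) * δ ^ (k + 2)) = 0
        rw [hDk k, hΔ0, zero_mul, smul_zero]
      have hp := hsum_pair (f := fun k : ℕ => (k.factorial : K)⁻¹ • (Δ (F.D^[k] x) * δ ^ k)) hC
      show hsum (fun k : ℕ => (k.factorial : K)⁻¹ • (Δ (F.D^[k] x) * δ ^ k)) = Δ x + δ
      rw [hp.2]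
      show (((0 : ℕ).factorial : K))⁻¹ • (Δ (F.D^[0] x) * δ ^ 0)
          + (((1 : ℕ).factorial : K))⁻¹ • (Δ (F.D^[1] x) * δ ^ 1) = Δ x + δ
      rw [Function.iterate_one, hx1, hΔone]
      simp
    have hA0 : A 0 = Δ s := by
      rw [hAdef]
      show ((Nat.factorial 0 : K))⁻¹ • (Δ (F.D^[0] s) * δ ^ 0) = Δ s
      simp
    have hB0 : B 0 = Δ (F.D s) := by
      rw [hBdef]
      show ((Nat.factorial 0 : K))⁻¹ • (Δ (F.D^[0] (F.D s)) * δ ^ 0) = Δ (F.D s)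
      simp
    have hembsucc : ∀ k : ℕ, (HahnSeries.SummableFamily.embDomain (d δ • SB) emb) (k + 1)
        = d δ * B k := by
      intro k
      have h' : (HahnSeries.SummableFamily.embDomain (d δ • SB) emb) (emb k)
          = (d δ • SB) k := HahnSeries.SummableFamily.embDomain_image _ _
      rw [show (k + 1 : ℕ) = emb k from rfl, h', hsmulapp]
    have hemb0 : (HahnSeries.SummableFamily.embDomain (d δ • SB) emb) 0 = 0 := by
      apply HahnSeries.SummableFamily.embDomain_notin_range
      rintro ⟨k, hk⟩
      exact Nat.succ_ne_zero k hk
    have hpt : (fun k : ℕ => d (A k)) =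
        fun k => ((d (Δ x)) • SB + HahnSeries.SummableFamily.embDomain (d δ • SB) emb) k := by
      funext k
      rw [HahnSeries.SummableFamily.add_apply, hsmulapp]
      cases k with
      | zero => rw [hemb0, add_zero, hA0, hB0, hchain s]
      | succ k =>
          rw [hembsucc k, hAdef, hBdef]
          show d ((((k + 1).factorial : K))⁻¹ • (Δ (F.D^[k + 1] s) * δ ^ (k + 1)))
            = d (Δ x) * ((((k + 1).factorial : K))⁻¹ • (Δ (F.D^[k + 1] (F.D s)) * δ ^ (k + 1)))
              + d δ * ((k.factorial : K)⁻¹ • (Δ (F.D^[k] (F.D s)) * δ ^ k))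
          rw [hd_sl.2.1, hd_leib, hchain (F.D^[k + 1] s), hdpow k]
          simp only [← Function.iterate_succ_apply]
          simp only [← Function.iterate_succ_apply']
          rw [smul_add, mul_smul_comm' ((k : K) + 1) (Δ (F.D^[k + 1] s)), smul_smul, hfac k,
            mul_smul_comm' (a := d (Δ x)), mul_smul_comm' (a := d δ)]
          congr 1
          · congr 1; ring
          · congr 1; ring
    have hsl := hd_sl.2.2 ℕ A hA
    have hTfam := hsum_eq_family
      (summableF_of_family (d (Δ x) • SB + HahnSeries.SummableFamily.embDomain (d δ • SB) emb))
      (d (Δ x) • SB + HahnSeries.SummableFamily.embDomain (d δ • SB) emb) (fun k => rfl)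
    rw [hTs, hTds, hTx, hsl.2, hpt, hTfam,
      HahnSeries.SummableFamily.hsum_add, HahnSeries.SummableFamily.hsum_smul,
      HahnSeries.SummableFamily.hsum_embDomain, HahnSeries.SummableFamily.hsum_smul,
      hsum_eq_family hB SB (fun k => rfl), hd_sl.1]
    ring
  · -- divergent case
    have hB : ¬ SummableF B := by
      intro hB
      apply hA
      apply summableF_head
      have key2 : (fun k : ℕ => A (k + 1)) = fun k : ℕ => ((k : K) + 1)⁻¹ • (δ * B k) := by
        funext k
        rw [hAdef, hBdef]
        show (((k + 1).factorial : K))⁻¹ • (Δ (F.D^[k + 1] s) * δ ^ (k + 1))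
          = ((k : K) + 1)⁻¹ • (δ * ((k.factorial : K)⁻¹ • (Δ (F.D^[k] (F.D s)) * δ ^ k)))
        rw [Function.iterate_succ_apply, mul_smul_comm', smul_smul,
          show ((k : K) + 1)⁻¹ * ((k.factorial : K))⁻¹ = (((k + 1).factorial : K))⁻¹ by
            rw [← hfac k, mul_comm (((k + 1).factorial : K))⁻¹ _, ← mul_assoc,
              inv_mul_cancel₀ (hk1 k), one_mul]]
        congr 1
        rw [pow_succ]
        ring
      rw [key2]
      exact summableF_smulF (summableF_mulF δ hB).1
    rw [hTs, hTds]
    unfold hsum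
    rw [dif_neg hA, dif_neg hB, hd0, mul_zero]
end Art
end
end

section
/- Let 𝕊 = K⟦𝔐⟧ be a field of Noetherian series equipped with a strongly linear derivation s ↦ s', and let x ∈ 𝕊∖{0}. Assume there is a subset 𝔚 ⊆ 𝔐 such that w† ≼ x⁻¹ for all w ∈ 𝔚, and such that for every monomial m ∈ 𝔐∖{1} and every n ∈ supp m' there exist s ∈ 𝔐 with s† ≺ m† and w ∈ 𝔚 with n = m·s·w. Then condition (⋆) holds with respect to x: for every m ∈ 𝔐, either (m† ≼ x⁻¹ and n† ≼ x⁻¹ for every n ∈ supp m') or (m† ≻ x⁻¹ and n† ≍ m† for every n ∈ supp m'). Here m† := m'/m. -/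
open HahnSeries
open scoped Classical

noncomputable section

namespace Art

section AuxLemmas

variable {Γ : Type} [AddCommGroup Γ] [LinearOrder Γ] [IsOrderedAddMonoid Γ] {K : Type} [Field K]

lemma mono_ne_zero (g : Γ) : mono K g ≠ 0 :=
  HahnSeries.single_ne_zero one_ne_zero

lemma D_one_eq_zero (D : HahnSeries Γ K → HahnSeries Γ K)
    (hD : ∀ a b, D (a * b) = D a * b + a * D b) : D 1 = 0 := by
  have h : D 1 = D 1 + D 1 := by simpa using hD 1 1
  exact add_eq_left.mp h.symm

lemma dag_add (D : HahnSeries Γ K → HahnSeries Γ K)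
    (hD : ∀ a b, D (a * b) = D a * b + a * D b) (a b : Γ) :
    dag D (a + b) = dag D a + dag D b := by
  have hm : mono K (a + b) = mono K a * mono K b := by
    simp [mono, HahnSeries.single_mul_single]
  have ha : mono K a ≠ 0 := mono_ne_zero a
  have hb : mono K b ≠ 0 := mono_ne_zero b
  unfold dag
  rw [hm, hD]
  field_simp

lemma order_le_of_mem {s : HahnSeries Γ K} {u : Γ} (hu : u ∈ s.support) :
    s.order ≤ u :=
  HahnSeries.order_le_of_coeff_ne_zero ((HahnSeries.mem_support s u).mp hu)

lemma order_mem_support {s : HahnSeries Γ K} (hs : s ≠ 0) : s.order ∈ s.support :=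
  (HahnSeries.mem_support s s.order).mpr (HahnSeries.coeff_order_eq_zero.not.mpr hs)

lemma dLE_of_order_le {s t : HahnSeries Γ K} (ht : t ≠ 0)
    (h : ∀ g ∈ s.support, t.order ≤ g) : dLE s t :=
  fun g hg => ⟨t.order, order_mem_support ht, h g hg⟩

lemma order_le_of_dLE {s t : HahnSeries Γ K} (h : dLE s t) {g : Γ}
    (hg : g ∈ s.support) : t.order ≤ g := by
  obtain ⟨v, hv, hle⟩ := h g hg
  exact le_trans (order_le_of_mem hv) hle

end AuxLemmas

/-- **Lemma 5.7 (derivation dichotomy).** Let `𝕊 = K⟦𝔐⟧` carry a strongly linear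
derivation and let `x ≠ 0`. If there is `𝔚 ⊆ 𝔐` with `w† ≼ x⁻¹` for all `w ∈ 𝔚` such that
for every monomial `m ≠ 1` and every `n ∈ supp m'` there are `s ∈ 𝔐` with `s† ≺ m†` and
`w ∈ 𝔚` with `n = m·s·w`, then condition (⋆) holds with respect to `x`. -/
theorem statement5 {Γ K : Type} [AddCommGroup Γ] [LinearOrder Γ] [IsOrderedAddMonoid Γ] [Field K]
    (D : HahnSeries Γ K → HahnSeries Γ K) (hD_sl : StronglyLinear D)
    (hD_leib : ∀ a b, D (a * b) = D a * b + a * D b)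
    (x : HahnSeries Γ K) (hx : x ≠ 0)
    (W : Set Γ) (hW : ∀ w ∈ W, dLE (dag D w) x⁻¹)
    (hpath : ∀ g : Γ, g ≠ 0 → ∀ h ∈ (D (mono K g)).support,
      ∃ s : Γ, dLT (dag D s) (dag D g) ∧ ∃ w ∈ W, h = g + s + w) :
    SpecCond D x := by
  intro g
  by_cases hDg : D (mono K g) = 0
  · left
    constructor
    · intro u hu
      exfalso
      have h0 : dag D g = 0 := by rw [dag, hDg, zero_mul]
      rw [h0] at hu
      simpa using hu
    · intro h hh
      rw [hDg] at hh
      simp at hh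
  · have hg0 : g ≠ 0 := by
      rintro rfl
      apply hDg
      have h1 : mono K (0 : Γ) = 1 := rfl
      rw [h1]
      exact D_one_eq_zero D hD_leib
    have hmg : mono K g ≠ 0 := mono_ne_zero g
    have hdagg : dag D g ≠ 0 := mul_ne_zero hDg (inv_ne_zero hmg)
    have hxinv : (x⁻¹ : HahnSeries Γ K) ≠ 0 := inv_ne_zero hx
    have key : ∀ h ∈ (D (mono K g)).support, ∃ s w, w ∈ W ∧
        dLT (dag D s) (dag D g) ∧ dag D h = dag D g + (dag D s + dag D w) := by
      intro h hh
      obtain ⟨s, hs, w, hw, rfl⟩ := hpath g hg0 h hh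
      refine ⟨s, w, hw, hs, ?_⟩
      rw [dag_add D hD_leib, dag_add D hD_leib]
      ring
    by_cases hord : x⁻¹.order ≤ (dag D g).order
    · -- `m† ≼ x⁻¹` case
      left
      have hgle : dLE (dag D g) x⁻¹ :=
        dLE_of_order_le hxinv fun u hu => le_trans hord (order_le_of_mem hu)
      refine ⟨hgle, ?_⟩
      intro h hh
      obtain ⟨s, w, hw, hslt, heq⟩ := key h hh
      apply dLE_of_order_le hxinv
      intro u hu
      rw [heq] at hu
      rcases HahnSeries.support_add_subset _ _ hu with hu | hu
      · exact le_trans hord (order_le_of_mem hu)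
      rcases HahnSeries.support_add_subset _ _ hu with hu | hu
      · obtain ⟨v, hv, hvu⟩ := hslt.2 u hu
        exact le_trans (le_trans hord (order_le_of_mem hv)) hvu.le
      · exact order_le_of_dLE (hW w hw) hu
    · -- `m† ≻ x⁻¹` case
      push_neg at hord
      right
      constructor
      · exact ⟨hdagg, fun u hu =>
          ⟨(dag D g).order, order_mem_support hdagg,
            lt_of_lt_of_le hord (order_le_of_mem hu)⟩⟩
      · intro h hh
        obtain ⟨s, w, hw, hslt, heq⟩ := key h hh
        set o := (dag D g).order with ho
        -- every monomial of the remainder is strictly above `o`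
        have hr : ∀ u ∈ (dag D s + dag D w).support, o < u := by
          intro u hu
          rcases HahnSeries.support_add_subset _ _ hu with hu | hu
          · obtain ⟨v, hv, hvu⟩ := hslt.2 u hu
            exact lt_of_le_of_lt (order_le_of_mem hv) hvu
          · obtain ⟨v, hv, hvu⟩ := hW w hw u hu
            exact lt_of_lt_of_le hord (le_trans (order_le_of_mem hv) hvu)
        have hoc : (dag D s + dag D w).coeff o = 0 := by
          by_contra hc
          exact lt_irrefl o (hr o ((HahnSeries.mem_support _ o).mpr hc))
        have hoh : o ∈ (dag D h).support := by
          rw [heq, HahnSeries.mem_support, HahnSeries.coeff_add, hoc, add_zero]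
          exact HahnSeries.coeff_order_eq_zero.not.mpr hdagg
        -- every monomial of `dag D h` is `≥ o`
        have hge : ∀ u ∈ (dag D h).support, o ≤ u := by
          intro u hu
          rw [heq] at hu
          rcases HahnSeries.support_add_subset _ _ hu with hu | hu
          · exact order_le_of_mem hu
          · exact (hr u hu).le
        constructor
        · intro u hu
          exact ⟨o, order_mem_support hdagg, hge u hu⟩
        · intro u hu
          exact ⟨o, hoh, order_le_of_mem hu⟩
end Art
end
end

section
/- Let K be a field, let 𝔑 be a partially ordered cancellative commutative monoid whose order is translation-invariant (so that K⟦𝔑⟧ is an algebra of Noetherian series), and let 𝔐 ⊆ 𝔑 be a submonoid with the induced order, so that 𝔸 = K⟦𝔐⟧ is a subalgebra of 𝔹 = K⟦𝔑⟧. Suppose ∂ : 𝔸 → 𝔹 is a strongly linear map satisfying ∂(m·n) = ∂(m)·n + m·∂(n) for all monomials m,n ∈ 𝔐. Then ∂ is a derivation: ∂(a·b) = ∂(a)·b + a·∂(b) for all a,b ∈ 𝔸. -/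
open HahnSeries
open scoped Classical

noncomputable section

namespace Art

section Proof7

variable {Γ K : Type} [AddCommMonoid Γ] [PartialOrder Γ] [IsOrderedCancelAddMonoid Γ] [Field K]

lemma summableF_coe {ι : Type} (F : HahnSeries.SummableFamily Γ K ι) : SummableF ⇑F :=
  ⟨F.isPWO_iUnion_support, fun g => F.finite_co_support g⟩

lemma hsum_coe {ι : Type} (F : HahnSeries.SummableFamily Γ K ι) : hsum ⇑F = F.hsum := by
  rw [hsum, dif_pos (summableF_coe F)]
  rfl

/-- The decomposition of a Hahn series into its monomials, as a summable family. -/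
def singleFam (a : HahnSeries Γ K) : HahnSeries.SummableFamily Γ K Γ where
  toFun g := HahnSeries.single g (a.coeff g)
  isPWO_iUnion_support' := by
    refine a.isPWO_support.mono ?_
    intro x hx
    simp only [Set.mem_iUnion] at hx
    obtain ⟨g, hg⟩ := hx
    rcases eq_or_ne (a.coeff g) 0 with h | h
    · simp [h] at hg
    · have := HahnSeries.support_single_subset hg
      simp only [Set.mem_singleton_iff] at this
      subst this
      exact h
  finite_co_support' g := by
    refine (Set.finite_singleton g).subset ?_
    intro i hi
    simp only [Set.mem_setOf_eq] at hi
    rw [HahnSeries.coeff_single] at hi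
    by_contra hne
    simp only [Set.mem_singleton_iff] at hne
    rw [if_neg (fun h : g = i => hne h.symm)] at hi
    exact hi rfl

lemma singleFam_apply (a : HahnSeries Γ K) (g : Γ) :
    singleFam a g = HahnSeries.single g (a.coeff g) := rfl

lemma singleFam_hsum (a : HahnSeries Γ K) : (singleFam a).hsum = a := by
  ext g
  rw [HahnSeries.SummableFamily.coeff_hsum]
  rw [finsum_eq_single _ g (fun i hi => ?_)]
  · simp [singleFam_apply]
  · rw [singleFam_apply, HahnSeries.coeff_single, if_neg]
    intro h
    exact hi h.symm

lemma singleFam_support_subset (a : HahnSeries Γ K) (g : Γ) :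
    (singleFam a g).support ⊆ a.support := by
  intro x hx
  rw [singleFam_apply] at hx
  rcases eq_or_ne (a.coeff g) 0 with h | h
  · simp [h] at hx
  · have := HahnSeries.support_single_subset hx
    simp only [Set.mem_singleton_iff] at this
    subst this
    exact h

lemma single_eq_smul_mono (g : Γ) (c : K) :
    HahnSeries.single g c = c • mono K g := by
  ext n
  rw [mono, HahnSeries.coeff_smul, HahnSeries.coeff_single, HahnSeries.coeff_single]
  split <;> simp

end Proof7

/-- **Lemma 4.2.** Let `𝔐 ⊆ 𝔑` be a submonoid of a partially ordered cancellative
commutative monoid, `𝔸 = K⟦𝔐⟧ ⊆ 𝔹 = K⟦𝔑⟧`, and let `∂ : 𝔸 → 𝔹` be a strongly linear map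
satisfying the Leibniz rule on monomials of `𝔐`. Then `∂` is a derivation on `𝔸`. -/
theorem statement7 {Γ K : Type} [AddCommMonoid Γ] [PartialOrder Γ]
    [IsOrderedCancelAddMonoid Γ] [Field K]
    (M : AddSubmonoid Γ)
    (D : HahnSeries Γ K → HahnSeries Γ K)
    (hadd : ∀ a b : HahnSeries Γ K, a.support ⊆ (M : Set Γ) → b.support ⊆ (M : Set Γ) →
      D (a + b) = D a + D b)
    (hsmul : ∀ (c : K) (a : HahnSeries Γ K), a.support ⊆ (M : Set Γ) → D (c • a) = c • D a)
    (hsl : ∀ (ι : Type) (fam : ι → HahnSeries Γ K), (∀ i, (fam i).support ⊆ (M : Set Γ)) →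
      SummableF fam → SummableF (fun i => D (fam i)) ∧ D (hsum fam) = hsum fun i => D (fam i))
    (hleib : ∀ g ∈ M, ∀ h ∈ M,
      D (mono K (g + h)) = D (mono K g) * mono K h + mono K g * D (mono K h)) :
    ∀ a b : HahnSeries Γ K, a.support ⊆ (M : Set Γ) → b.support ⊆ (M : Set Γ) →
      D (a * b) = D a * b + a * D b := by
  intro a b ha hb
  have hD0 : D 0 = 0 := by
    have h := hsmul 0 0 (by simp)
    simpa using h
  have hFAsupp : ∀ i : Γ, ((singleFam a) i).support ⊆ (M : Set Γ) :=
    fun i => (singleFam_support_subset a i).trans ha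
  have hFBsupp : ∀ i : Γ, ((singleFam b) i).support ⊆ (M : Set Γ) :=
    fun i => (singleFam_support_subset b i).trans hb
  obtain ⟨hDAsum, hDAeq⟩ := hsl Γ ⇑(singleFam a) hFAsupp (summableF_coe (singleFam a))
  obtain ⟨hDBsum, hDBeq⟩ := hsl Γ ⇑(singleFam b) hFBsupp (summableF_coe (singleFam b))
  set DA : HahnSeries.SummableFamily Γ K Γ :=
    ⟨fun i => D ((singleFam a) i), hDAsum.1, hDAsum.2⟩ with hDAdef
  set DB : HahnSeries.SummableFamily Γ K Γ :=
    ⟨fun i => D ((singleFam b) i), hDBsum.1, hDBsum.2⟩ with hDBdef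
  have hDa : D a = DA.hsum := by
    have h1 : hsum ⇑(singleFam a) = a := by rw [hsum_coe, singleFam_hsum]
    have h2 : hsum (fun i => D ((singleFam a) i)) = DA.hsum := hsum_coe DA
    rw [← h1, hDAeq, h2]
  have hDb : D b = DB.hsum := by
    have h1 : hsum ⇑(singleFam b) = b := by rw [hsum_coe, singleFam_hsum]
    have h2 : hsum (fun i => D ((singleFam b) i)) = DB.hsum := hsum_coe DB
    rw [← h1, hDBeq, h2]
  set P := HahnSeries.SummableFamily.smul (singleFam a) (singleFam b) with hPdef
  have hPapp : ∀ p : Γ × Γ,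
      P p = HahnSeries.single (p.1 + p.2) (a.coeff p.1 * b.coeff p.2) := by
    intro p
    show (HahnModule.of K).symm ((singleFam a) p.1 • (HahnModule.of K) ((singleFam b) p.2)) = _
    rw [HahnSeries.of_symm_smul_of_eq_mul, singleFam_apply, singleFam_apply,
      HahnSeries.single_mul_single]
  have hPsupp : ∀ p : Γ × Γ, (P p).support ⊆ (M : Set Γ) := by
    intro p x hx
    rw [hPapp] at hx
    rcases eq_or_ne (a.coeff p.1 * b.coeff p.2) 0 with h | h
    · simp [h] at hx
    · have hx' := HahnSeries.support_single_subset hx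
      simp only [Set.mem_singleton_iff] at hx'
      subst hx'
      have h1 : p.1 ∈ M := ha (left_ne_zero_of_mul h)
      have h2 : p.2 ∈ M := hb (right_ne_zero_of_mul h)
      exact add_mem h1 h2
  obtain ⟨hDPsum, hDPeq⟩ := hsl (Γ × Γ) ⇑P hPsupp (summableF_coe P)
  have hPhsum : hsum ⇑P = a * b := by
    rw [hsum_coe, hPdef, HahnSeries.SummableFamily.smul_hsum,
      HahnSeries.of_symm_smul_of_eq_mul, singleFam_hsum, singleFam_hsum]
  set Q := HahnSeries.SummableFamily.smul DA (singleFam b) +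
    HahnSeries.SummableFamily.smul (singleFam a) DB with hQdef
  have hQapp : ∀ p : Γ × Γ,
      Q p = D ((singleFam a) p.1) * (singleFam b) p.2 +
        (singleFam a) p.1 * D ((singleFam b) p.2) := by
    intro p
    rw [hQdef, HahnSeries.SummableFamily.add_apply]
    rfl
  have hmonsupp : ∀ g ∈ M, (mono K g : HahnSeries Γ K).support ⊆ (M : Set Γ) := by
    intro g hg x hx
    have := HahnSeries.support_single_subset hx
    simp only [Set.mem_singleton_iff] at this
    subst this
    exact hg
  have hkey : (fun p : Γ × Γ => D (P p)) = ⇑Q := by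
    funext p
    rw [hQapp, hPapp]
    rcases eq_or_ne (a.coeff p.1) 0 with h1 | h1
    · simp [singleFam_apply, h1, hD0, HahnSeries.single_eq_zero]
    · rcases eq_or_ne (b.coeff p.2) 0 with h2 | h2
      · simp [singleFam_apply, h2, hD0, HahnSeries.single_eq_zero]
      · have hm1 : p.1 ∈ M := ha h1
        have hm2 : p.2 ∈ M := hb h2
        rw [single_eq_smul_mono, hsmul _ _ (hmonsupp _ (add_mem hm1 hm2)),
          hleib p.1 hm1 p.2 hm2, singleFam_apply, singleFam_apply,
          single_eq_smul_mono p.1, single_eq_smul_mono p.2,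
          hsmul _ _ (hmonsupp _ hm1), hsmul _ _ (hmonsupp _ hm2)]
        simp only [Algebra.smul_def, map_mul]
        ring
  calc D (a * b) = hsum (fun p => D (P p)) := by rw [← hPhsum, hDPeq]
    _ = Q.hsum := by rw [hkey, hsum_coe]
    _ = D a * b + a * D b := by
        rw [hQdef, HahnSeries.SummableFamily.hsum_add,
          HahnSeries.SummableFamily.smul_hsum,
          HahnSeries.SummableFamily.smul_hsum,
          HahnSeries.of_symm_smul_of_eq_mul, HahnSeries.of_symm_smul_of_eq_mul,
          singleFam_hsum, singleFam_hsum, hDa, hDb]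
end Art
end
end

section
/- Let (𝕊,ℓ,∂) be a differential pre-logarithmic Hahn field with ℓ(𝔐) closed under truncation, and let 𝔖 be a final segment of (𝔐,≺). Set 𝔖^{-‡} := {m ∈ 𝔐 : m = 1 or the dominant monomial 𝔡_{m†} of m† lies in 𝔖⁻¹ = {u⁻¹ : u ∈ 𝔖}} (a subgroup of 𝔐) and 𝕊_{[𝔖]} := K⟦𝔖^{-‡}⟧. Assume supp m' ⊆ 𝔖^{-‡} for every m ∈ 𝔖^{-‡}. Then the operator X·∂̄ on 𝕊_{[𝔖]}⟦X⟧_𝔖, given as the strongly linear extension of mX^k ↦ m'·X^{k+1}, is a strongly linear derivation which is contracting: for every m ∈ 𝔖^{-‡}∖{1}, k ∈ ℕ, and q ∈ supp m', one has qX^{k+1} ≺_𝔖 mX^k. -/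
open HahnSeries
open scoped Classical

noncomputable section

namespace Art

/-! ### Auxiliary material for the proof of `statement10`. -/

section AuxGeneric

variable {Γ : Type} [AddCommGroup Γ] [LinearOrder Γ] [IsOrderedAddMonoid Γ] {K : Type} [Field K] [LinearOrder K] [IsStrictOrderedRing K]

/-- Every sequence of naturals admits a nondecreasing pair. -/
lemma aux_nat_pair (t : ℕ → ℕ) : ∃ i j : ℕ, i < j ∧ t i ≤ t j := by
  have hP : ∃ k : ℕ, ∃ n, t n = k := ⟨t 0, 0, rfl⟩
  obtain ⟨i, hi⟩ := Nat.find_spec hP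
  exact ⟨i, i + 1, Nat.lt_succ_self i, hi ▸ Nat.find_min' hP ⟨i + 1, rfl⟩⟩

/-- The range of a monotone sequence is partially well-ordered. -/
lemma aux_isPWO_range_mono {α : Type} [Preorder α] {x : ℕ → α} (hx : Monotone x) :
    (Set.range x).IsPWO := by
  refine Set.partiallyWellOrderedOn_iff_exists_lt.mpr ?_
  intro f hf
  choose t ht using hf
  obtain ⟨i, j, hij, hle⟩ := aux_nat_pair t
  exact ⟨i, j, hij, by rw [← ht i, ← ht j]; exact hx hle⟩

/-- A strictly monotone enumeration inside an infinite set of naturals. -/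
lemma aux_enum {s : Set ℕ} (hs : s.Infinite) :
    ∃ σ : ℕ → ℕ, StrictMono σ ∧ ∀ n, σ n ∈ s := by
  have step : ∀ n : ℕ, ∃ m, n < m ∧ m ∈ s := by
    intro n
    obtain ⟨m, hm⟩ := (hs.diff (Set.finite_Iic n)).nonempty
    exact ⟨m, by simpa using hm.2, hm.1⟩
  obtain ⟨m0, hm0⟩ := hs.nonempty
  let σ : ℕ → ℕ := fun n => Nat.rec m0 (fun _ prev => (step prev).choose) n
  refine ⟨σ, strictMono_nat_of_lt_succ fun n => ?_, fun n => ?_⟩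
  · exact (step (σ n)).choose_spec.1
  · cases n with
    | zero => exact hm0
    | succ n => exact (step (σ n)).choose_spec.2

/-- Monotone sequences: either some value has an infinite fiber (constant
subsequence), or there is a strictly increasing subsequence. -/
lemma aux_mono_dichot {α : Type} [LinearOrder α] (x : ℕ → α) (hx : Monotone x) :
    (∃ σ : ℕ → ℕ, StrictMono σ ∧ ∀ n, x (σ n) = x (σ 0)) ∨
      ∃ σ : ℕ → ℕ, StrictMono σ ∧ StrictMono (x ∘ σ) := by
  by_cases h : ∃ c, {n | x n = c}.Infinite
  · left
    obtain ⟨c, hc⟩ := h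
    obtain ⟨σ, hσ, hmem⟩ := aux_enum hc
    exact ⟨σ, hσ, fun n => by rw [hmem n, hmem 0]⟩
  · right
    push_neg at h
    have step : ∀ n : ℕ, ∃ m, n < m ∧ x n < x m := by
      intro n
      have hfin : {k | x k = x n}.Finite := h (x n)
      obtain ⟨B, hB⟩ := hfin.bddAbove
      refine ⟨max n B + 1, by omega, lt_of_le_of_ne (hx (by omega)) fun hEq => ?_⟩
      have : max n B + 1 ≤ B := hB hEq.symm
      omega
    let σ : ℕ → ℕ := fun n => Nat.rec 0 (fun _ prev => (step prev).choose) n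
    have hσ : StrictMono σ := strictMono_nat_of_lt_succ fun n => (step (σ n)).choose_spec.1
    exact ⟨σ, hσ, strictMono_nat_of_lt_succ fun n => (step (σ n)).choose_spec.2⟩

/-- Extract a strictly monotone sequence from an infinite PWO set in a linear order. -/
lemma aux_pwo_strictmono {α : Type} [LinearOrder α] {A : Set α} (hA : A.IsPWO)
    (hinf : A.Infinite) : ∃ x : ℕ → α, StrictMono x ∧ ∀ n, x n ∈ A := by
  let emb := hinf.natEmbedding
  have hmem : ∀ n, (emb n : α) ∈ A := fun n => (emb n).2
  obtain ⟨σ, hσ⟩ := hA.exists_monotone_subseq (f := fun n => (emb n : α)) hmem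
  refine ⟨fun n => (emb (σ n) : α), fun m n hmn => ?_, fun n => hmem (σ n)⟩
  refine lt_of_le_of_ne (hσ hmn.le) fun hEq => ?_
  exact absurd (emb.injective (Subtype.ext hEq) ▸ rfl : σ m = σ n) (by
    exact Nat.ne_of_lt (σ.strictMono hmn))

/-- Infinite range of an injective sequence with all terms in a set. -/
lemma aux_infinite_of_inj {α : Type} {A : Set α} (x : ℕ → α) (hinj : Function.Injective x)
    (hmem : ∀ n, x n ∈ A) : A.Infinite :=
  Set.infinite_of_injective_forall_mem hinj hmem

end AuxGeneric

section AuxCut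

variable {Γ : Type} [AddCommGroup Γ] [LinearOrder Γ] [IsOrderedAddMonoid Γ] {K : Type} [Field K] [LinearOrder K] [IsStrictOrderedRing K]
variable {S : Set Γ}

lemma aux_zsmul_anti {n : ℤ} (hn : n ≤ 0) {a b : Γ} (h : a ≤ b) : n • b ≤ n • a := by
  have h1 : (-n) • a ≤ (-n) • b := zsmul_le_zsmul_right (neg_nonneg.mpr hn) h
  rw [neg_zsmul, neg_zsmul] at h1
  simpa using neg_le_neg h1

lemma aux_cutLT_trans {p q r : Γ × ℕ} (h1 : cutLT S p q) (h2 : cutLT S q r) :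
    cutLT S p r := by
  rcases h1 with ⟨hk1, hx1⟩ | ⟨hk1, u, hu, hu1⟩ <;>
    rcases h2 with ⟨hk2, hx2⟩ | ⟨hk2, v, hv, hv2⟩
  · exact Or.inl ⟨hk1.trans hk2, hx2.trans hx1⟩
  · refine Or.inr ⟨by omega, v, hv, ?_⟩
    calc ((r.2 : ℤ) - (p.2 : ℤ)) • v = ((r.2 : ℤ) - (q.2 : ℤ)) • v := by rw [hk1]
      _ ≤ q.1 - r.1 := hv2
      _ ≤ p.1 - r.1 := sub_le_sub_right hx1.le _
  · refine Or.inr ⟨by omega, u, hu, ?_⟩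
    calc ((r.2 : ℤ) - (p.2 : ℤ)) • u = ((q.2 : ℤ) - (p.2 : ℤ)) • u := by rw [hk2]
      _ ≤ p.1 - q.1 := hu1
      _ ≤ p.1 - r.1 := sub_le_sub_left hx2.le _
  · refine Or.inr ⟨by omega, max u v, ?_, ?_⟩
    · rcases max_choice u v with h | h <;> rw [h] <;> assumption
    · have e1 : ((q.2 : ℤ) - (p.2 : ℤ)) • (max u v) ≤ p.1 - q.1 :=
        le_trans (aux_zsmul_anti (by omega) (le_max_left u v)) hu1
      have e2 : ((r.2 : ℤ) - (q.2 : ℤ)) • (max u v) ≤ q.1 - r.1 :=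
        le_trans (aux_zsmul_anti (by omega) (le_max_right u v)) hv2
      calc ((r.2 : ℤ) - (p.2 : ℤ)) • (max u v)
          = ((r.2 : ℤ) - (q.2 : ℤ)) • (max u v) + ((q.2 : ℤ) - (p.2 : ℤ)) • (max u v) := by
            rw [← add_zsmul]; ring_nf
        _ ≤ (q.1 - r.1) + (p.1 - q.1) := add_le_add e2 e1
        _ = p.1 - r.1 := by abel

/-- The chain relation used for monotone subsequence extraction. -/
def auxR (S : Set Γ) : Γ × ℕ → Γ × ℕ → Prop := fun x y => y = x ∨ cutLT S y x

instance auxR_refl : IsRefl (Γ × ℕ) (auxR S) := ⟨fun _ => Or.inl rfl⟩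

instance auxR_trans : IsTrans (Γ × ℕ) (auxR S) := by
  constructor
  rintro a b c (rfl | h1) h2
  · exact h2
  · rcases h2 with rfl | h2
    · exact Or.inr h1
    · exact Or.inr (aux_cutLT_trans h2 h1)

instance auxR_pre : IsPreorder (Γ × ℕ) (auxR S) where
  refl := fun _ => Or.inl rfl
  trans := fun _ _ _ => auxR_trans.trans _ _ _

lemma aux_cutWB_pwo {A : Set (Γ × ℕ)} (hA : CutWB S A) :
    A.PartiallyWellOrderedOn (auxR S) := Set.partiallyWellOrderedOn_iff_exists_lt.mpr hA

lemma aux_cutWB_mono {A B : Set (Γ × ℕ)} (hA : CutWB S A) (hBA : B ⊆ A) : CutWB S B :=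
  fun f hf => hA f fun n => hBA (hf n)

lemma aux_slice_pwo {A : Set (Γ × ℕ)} (hA : CutWB S A) (k : ℕ) :
    {g : Γ | (g, k) ∈ A}.IsPWO := by
  refine Set.partiallyWellOrderedOn_iff_exists_lt.mpr ?_
  intro f hf
  obtain ⟨i, j, hij, hgood⟩ := hA (fun n => (f n, k)) hf
  rcases hgood with heq | hlt
  · exact ⟨i, j, hij, (congrArg Prod.fst heq).ge⟩
  · rcases hlt with ⟨-, hx⟩ | ⟨hk, -⟩
    · exact ⟨i, j, hij, hx.le⟩
    · exact absurd hk (lt_irrefl _)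

end AuxCut

section AuxDag

variable {Γ : Type} [AddCommGroup Γ] [LinearOrder Γ] [IsOrderedAddMonoid Γ] {K : Type} [Field K] [LinearOrder K] [IsStrictOrderedRing K]
variable (F : PreLogField Γ K)

lemma aux_mono_def (g : Γ) : (mono K g : HahnSeries Γ K) = HahnSeries.single g 1 := rfl

lemma aux_mono_mul (a b : Γ) :
    (mono K a : HahnSeries Γ K) * mono K b = mono K (a + b) := by
  rw [aux_mono_def, aux_mono_def, aux_mono_def, HahnSeries.single_mul_single, mul_one]

lemma aux_mono_zero : (mono K (0 : Γ) : HahnSeries Γ K) = 1 :=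
  HahnSeries.single_zero_one

lemma aux_D_one : F.D 1 = 0 := by
  have h := F.D_leibniz 1 1
  rw [mul_one, one_mul, mul_one] at h
  exact (add_eq_left).mp h.symm

lemma aux_mono_inv (g : Γ) : (mono K g : HahnSeries Γ K)⁻¹ = mono K (-g) := by
  apply inv_eq_of_mul_eq_one_right
  rw [aux_mono_mul, add_neg_cancel, aux_mono_zero]

lemma aux_dag_eq (g : Γ) : dag F.D g = F.D (mono K g) * mono K (-g) := by
  rw [dag, aux_mono_inv]

lemma aux_dag_coeff (g y : Γ) :
    (dag F.D g).coeff y = (F.D (mono K g)).coeff (y + g) := by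
  rw [aux_dag_eq]
  have := HahnSeries.coeff_mul_single_add (r := (1 : K)) (x := F.D (mono K g))
    (a := y + g) (b := -g)
  rw [add_neg_cancel_right] at this
  rw [show HahnSeries.single (-g) (1 : K) = mono K (-g) from rfl] at this
  rw [this, mul_one]

lemma aux_dag_zero : dag F.D (0 : Γ) = 0 := by
  rw [aux_dag_eq, aux_mono_zero, aux_D_one, zero_mul]

lemma aux_dag_add (a b : Γ) : dag F.D (a + b) = dag F.D a + dag F.D b := by
  have h1 : (mono K b : HahnSeries Γ K) * mono K (-b) = 1 := by
    rw [aux_mono_mul, add_neg_cancel, aux_mono_zero]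
  have h2 : (mono K a : HahnSeries Γ K) * mono K (-a) = 1 := by
    rw [aux_mono_mul, add_neg_cancel, aux_mono_zero]
  rw [aux_dag_eq, aux_dag_eq, aux_dag_eq]
  rw [show (mono K (a + b) : HahnSeries Γ K) = mono K a * mono K b from (aux_mono_mul a b).symm]
  rw [F.D_leibniz, neg_add, ← aux_mono_mul (-a) (-b)]
  calc (F.D (mono K a) * mono K b + mono K a * F.D (mono K b)) * (mono K (-a) * mono K (-b))
      = F.D (mono K a) * mono K (-a) * (mono K b * mono K (-b))
        + F.D (mono K b) * mono K (-b) * (mono K a * mono K (-a)) := by ring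
    _ = F.D (mono K a) * mono K (-a) + F.D (mono K b) * mono K (-b) := by
        rw [h1, h2, mul_one, mul_one]

lemma aux_dag_nsmul (n : ℕ) (u : Γ) : dag F.D (n • u) = n • dag F.D u := by
  induction n with
  | zero => simpa using aux_dag_zero F
  | succ n ih => rw [succ_nsmul, succ_nsmul, aux_dag_add, ih]

lemma aux_supp_shift {g h : Γ} :
    (F.D (mono K g)).coeff h = (dag F.D g).coeff (h - g) := by
  rw [aux_dag_coeff, sub_add_cancel]

lemma aux_leib_coeff (a b y : Γ) :
    (F.D (mono K (a + b))).coeff y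
      = (F.D (mono K a)).coeff (y - b) + (F.D (mono K b)).coeff (y - a) := by
  rw [show (mono K (a + b) : HahnSeries Γ K) = mono K a * mono K b from (aux_mono_mul a b).symm]
  rw [F.D_leibniz, HahnSeries.coeff_add]
  congr 1
  · have := HahnSeries.coeff_mul_single_add (r := (1 : K)) (x := F.D (mono K a))
      (a := y - b) (b := b)
    rw [sub_add_cancel] at this
    rw [aux_mono_def b, this, mul_one]
  · have := HahnSeries.coeff_single_mul_add (r := (1 : K)) (x := F.D (mono K b))
      (a := y - a) (b := a)
    rw [sub_add_cancel] at this
    rw [aux_mono_def a, this, one_mul]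

/-- Key finiteness: over a PWO set of exponents, only finitely many monomials have a
derivative support containing a given point. -/
lemma aux_keyfin {U : Set Γ} (hU : U.IsPWO) (h : Γ) :
    {g | g ∈ U ∧ (F.D (mono K g)).coeff h ≠ 0}.Finite := by
  by_contra hinf
  have hinf' : {g | g ∈ U ∧ (F.D (mono K g)).coeff h ≠ 0}.Infinite := hinf
  let emb := hinf'.natEmbedding
  set x : ℕ → Γ := fun n => (emb n : Γ) with hxdef
  have hx : ∀ n, x n ∈ U ∧ (F.D (mono K (x n))).coeff h ≠ 0 := fun n => (emb n).2
  have hinj : Function.Injective x := fun a b hab => emb.injective (Subtype.ext hab)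
  have hsum : SummableF (fun n => (mono K (x n) : HahnSeries Γ K)) := by
    constructor
    · apply Set.IsPWO.mono hU
      intro γ hγ
      simp only [Set.mem_iUnion] at hγ
      obtain ⟨n, hn⟩ := hγ
      rw [aux_mono_def, HahnSeries.support_single_of_ne one_ne_zero] at hn
      rw [Set.mem_singleton_iff.mp hn]
      exact (hx n).1
    · intro γ
      apply Set.Subsingleton.finite
      intro m hm n hn
      simp only [Set.mem_setOf_eq, aux_mono_def] at hm hn
      have hm' : x m = γ := by
        by_contra hne; exact hm (HahnSeries.coeff_single_of_ne (Ne.symm hne))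
      have hn' : x n = γ := by
        by_contra hne; exact hn (HahnSeries.coeff_single_of_ne (Ne.symm hne))
      exact hinj (hm'.trans hn'.symm)
  have hpt := ((F.D_sl.2.2 ℕ _ hsum).1).2 h
  have hsub : (Set.univ : Set ℕ) ⊆ {n | (F.D (mono K (x n))).coeff h ≠ 0} :=
    fun n _ => (hx n).2
  exact Set.infinite_univ (hpt.subset hsub)

/-- PWO of the union of derivative supports over a PWO index set. -/
lemma aux_unionD_pwo {V : Set Γ} (hV : V.IsPWO) :
    (⋃ g ∈ V, (F.D (mono K g)).support).IsPWO := by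
  have hsum : SummableF (fun v : V => (mono K (v : Γ) : HahnSeries Γ K)) := by
    constructor
    · apply Set.IsPWO.mono hV
      intro γ hγ
      simp only [Set.mem_iUnion] at hγ
      obtain ⟨v, hv⟩ := hγ
      rw [aux_mono_def, HahnSeries.support_single_of_ne one_ne_zero] at hv
      rw [Set.mem_singleton_iff.mp hv]
      exact v.2
    · intro γ
      apply Set.Subsingleton.finite
      intro i hi j hj
      simp only [Set.mem_setOf_eq, aux_mono_def] at hi hj
      have hi' : (i : Γ) = γ := by
        by_contra hne; exact hi (HahnSeries.coeff_single_of_ne (Ne.symm hne))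
      have hj' : (j : Γ) = γ := by
        by_contra hne; exact hj (HahnSeries.coeff_single_of_ne (Ne.symm hne))
      exact Subtype.ext (hi'.trans hj'.symm)
  have hPWO := ((F.D_sl.2.2 V _ hsum).1).1
  apply Set.IsPWO.mono hPWO
  intro γ hγ
  simp only [Set.mem_iUnion] at hγ ⊢
  obtain ⟨g, hgV, hγg⟩ := hγ
  exact ⟨⟨g, hgV⟩, hγg⟩

end AuxDag

section AuxCore

variable {Γ : Type} [AddCommGroup Γ] [LinearOrder Γ] [IsOrderedAddMonoid Γ] {K : Type} [Field K] [LinearOrder K] [IsStrictOrderedRing K]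

/-- The `OK` predicate: the pair `(a, x)` admits a chain witness whose contribution does
not cancel the visible coefficient at the marked point `d x`. -/
def auxOK (F : PreLogField Γ K) (S : Set Γ) (g d : ℕ → Γ) (k : ℕ → ℕ) (a x : ℕ) : Prop :=
  ∃ u ∈ S, ((k a : ℤ) - (k x : ℤ)) • u ≤ g x - g a ∧
    (dag F.D (g x)).coeff (d x) + ((k x - k a : ℕ) : K) * (dag F.D u).coeff (d x) ≠ 0

/-- The core contradiction: no sequence can satisfy the chain condition, the negated
cut inequalities, with visible strictly decreasing marked points. -/
lemma aux_core (F : PreLogField Γ K) (S : Set Γ) (g d : ℕ → Γ) (k : ℕ → ℕ)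
    (hk : StrictMono k)
    (hβ : ∀ n, (dag F.D (g n)).coeff (d n) ≠ 0)
    (hchain : ∀ m n, m < n → ∃ u ∈ S, ((k m : ℤ) - (k n : ℤ)) • u ≤ g n - g m)
    (hstars : ∀ m n, m < n → ∀ u ∈ S,
      ¬(((k m : ℤ) - (k n : ℤ)) • u ≤ (g n + d n) - (g m + d m))) : False := by
  classical
  -- d is strictly decreasing
  have hd : ∀ m n, m < n → d n < d m := by
    intro m n hmn
    obtain ⟨u, huS, hu⟩ := hchain m n hmn
    by_contra hcon
    push_neg at hcon
    refine hstars m n hmn u huS ?_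
    calc ((k m : ℤ) - (k n : ℤ)) • u ≤ g n - g m := hu
      _ ≤ (g n + d n) - (g m + d m) := by
          rw [add_sub_add_comm]
          exact le_add_of_nonneg_right (sub_nonneg.mpr hcon)
  -- only finitely many marked points lie in any fixed Hahn support
  have hhits : ∀ w : HahnSeries Γ K, {x : ℕ | w.coeff (d x) ≠ 0}.Finite := by
    intro w
    by_contra hinf
    obtain ⟨σ, hσ, hσmem⟩ := aux_enum (hinf : {x : ℕ | w.coeff (d x) ≠ 0}.Infinite)
    obtain ⟨i, j, hij, hle⟩ := w.isPWO_support.exists_lt (f := fun n => d (σ n))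
      (fun n => (HahnSeries.mem_support _ _).mpr (hσmem n))
    exact absurd hle (not_le.mpr (hd _ _ (hσ hij)))
  -- the OK-lemma
  have okl : ∀ T : Set ℕ, T.Infinite →
      ∃ a, a ∈ T ∧ {x | x ∈ T ∧ a < x ∧ auxOK F S g d k a x}.Infinite := by
    intro T hT
    by_contra hno
    push_neg at hno
    obtain ⟨a1, ha1⟩ := hT.nonempty
    obtain ⟨a2, ha2d⟩ := (hT.diff (Set.finite_singleton a1)).nonempty
    have hane : a2 ≠ a1 := by simpa using ha2d.2
    have hfin1 : {x | x ∈ T ∧ a1 < x ∧ auxOK F S g d k a1 x}.Finite :=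
      hno a1 ha1
    have hfin2 : {x | x ∈ T ∧ a2 < x ∧ auxOK F S g d k a2 x}.Finite :=
      hno a2 ha2d.1
    have hbig : (T \ ({x | x ∈ T ∧ a1 < x ∧ auxOK F S g d k a1 x}
        ∪ {x | x ∈ T ∧ a2 < x ∧ auxOK F S g d k a2 x} ∪ Set.Iic (max a1 a2))).Infinite :=
      hT.diff ((hfin1.union hfin2).union (Set.finite_Iic _))
    obtain ⟨x, hxT, hxnot⟩ := hbig.nonempty
    rw [Set.mem_union, Set.mem_union] at hxnot
    push_neg at hxnot
    obtain ⟨⟨hn1, hn2⟩, hxgt'⟩ := hxnot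
    have hxgt : max a1 a2 < x := by simpa using hxgt'
    have hx1 : a1 < x := lt_of_le_of_lt (le_max_left a1 a2) hxgt
    have hx2 : a2 < x := lt_of_le_of_lt (le_max_right a1 a2) hxgt
    have hfail1 : ∀ u ∈ S, ((k a1 : ℤ) - (k x : ℤ)) • u ≤ g x - g a1 →
        (dag F.D (g x)).coeff (d x)
          + ((k x - k a1 : ℕ) : K) * (dag F.D u).coeff (d x) = 0 := by
      intro u huS hineq
      by_contra hne
      exact hn1 ⟨hxT, hx1, u, huS, hineq, hne⟩
    have hfail2 : ∀ u ∈ S, ((k a2 : ℤ) - (k x : ℤ)) • u ≤ g x - g a2 →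
        (dag F.D (g x)).coeff (d x)
          + ((k x - k a2 : ℕ) : K) * (dag F.D u).coeff (d x) = 0 := by
      intro u huS hineq
      by_contra hne
      exact hn2 ⟨hxT, hx2, u, huS, hineq, hne⟩
    obtain ⟨u1, hu1S, hu1⟩ := hchain a1 x hx1
    obtain ⟨u2, hu2S, hu2⟩ := hchain a2 x hx2
    have huS : max u1 u2 ∈ S := by
      rcases max_choice u1 u2 with h | h <;> rw [h] <;> assumption
    have hw1 : ((k a1 : ℤ) - (k x : ℤ)) • (max u1 u2) ≤ g x - g a1 := by
      refine le_trans (aux_zsmul_anti ?_ (le_max_left u1 u2)) hu1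
      have := hk hx1; omega
    have hw2 : ((k a2 : ℤ) - (k x : ℤ)) • (max u1 u2) ≤ g x - g a2 := by
      refine le_trans (aux_zsmul_anti ?_ (le_max_right u1 u2)) hu2
      have := hk hx2; omega
    have e1 := hfail1 _ huS hw1
    have e2 := hfail2 _ huS hw2
    have hkne : (k x - k a1 : ℕ) ≠ (k x - k a2 : ℕ) := by
      have h1 := hk hx1
      have h2 := hk hx2
      have h3 : k a1 ≠ k a2 := fun h => hane (hk.injective h.symm)
      omega
    have hcc : ((k x - k a1 : ℕ) : K) * (dag F.D (max u1 u2)).coeff (d x)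
        = ((k x - k a2 : ℕ) : K) * (dag F.D (max u1 u2)).coeff (d x) := by
      linarith [e1, e2]
    have hc0 : (dag F.D (max u1 u2)).coeff (d x) = 0 := by
      by_contra hc
      exact hkne (Nat.cast_injective (mul_right_cancel₀ hc hcc))
    rw [hc0, mul_zero, add_zero] at e1
    exact hβ x e1
  -- the invariant for the recursive stage construction
  set Inv : Set ℕ × ℕ × List Γ → Prop := fun q =>
    ({x | x ∈ q.1 ∧ q.2.1 < x ∧ auxOK F S g d k q.2.1 x}.Infinite) ∧
      (∀ x ∈ q.1, ∀ w ∈ q.2.2, (dag F.D w).coeff (d x) = 0) with hInvDef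
  have hstep : ∀ q : Set ℕ × ℕ × List Γ, Inv q → ∃ q' : Set ℕ × ℕ × List Γ,
      Inv q' ∧ q.2.1 < q'.2.1 ∧ q'.2.1 ∈ q.1 ∧ (∀ x ∈ q'.1, x ∈ q.1) ∧
      ∃ u, u ∈ S ∧ q'.2.2 = u :: q.2.2 ∧
        ((k q.2.1 : ℤ) - (k q'.2.1 : ℤ)) • u ≤ g q'.2.1 - g q.2.1 ∧
        (dag F.D (g q'.2.1)).coeff (d q'.2.1)
          + ((k q'.2.1 - k q.2.1 : ℕ) : K) * (dag F.D u).coeff (d q'.2.1) ≠ 0 := by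
    rintro ⟨T, a, ws⟩ ⟨hX, hcl⟩
    obtain ⟨a', ha'mem, ha'X⟩ := okl {x | x ∈ T ∧ a < x ∧ auxOK F S g d k a x} hX
    obtain ⟨ha'T, ha'lt, u, huS, huineq, hune⟩ := ha'mem
    refine ⟨⟨{x | (x ∈ {y | y ∈ {z | z ∈ T ∧ a < z ∧ auxOK F S g d k a z}
          ∧ a' < y ∧ auxOK F S g d k a' y}) ∧ (dag F.D u).coeff (d x) = 0}, a', u :: ws⟩,
      ⟨?_, ?_⟩, ha'lt, ha'T, ?_, u, huS, rfl, huineq, hune⟩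
    · -- new hX
      refine Set.Infinite.mono ?_ (ha'X.diff (hhits (dag F.D u)))
      rintro z ⟨hz1, hz2⟩
      exact ⟨⟨hz1, not_not.mp hz2⟩, hz1.2.1, hz1.2.2⟩
    · -- new hcl
      rintro z ⟨hz1, hz2⟩ w hw
      rcases List.mem_cons.mp hw with rfl | hw'
      · exact hz2
      · exact hcl z hz1.1.1 w hw'
    · rintro z ⟨hz1, _⟩
      exact hz1.1.1
  -- the initial stage
  obtain ⟨a0, _, ha0X⟩ := okl Set.univ Set.infinite_univ
  set st : ℕ → Set ℕ × ℕ × List Γ := fun p =>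
    Nat.rec ((Set.univ : Set ℕ), a0, ([] : List Γ))
      (fun _ q => if h : Inv q then (hstep q h).choose else q) p with hstDef
  have hInvAll : ∀ p, Inv (st p) := by
    intro p
    induction p with
    | zero =>
      constructor
      · exact ha0X
      · intro x _ w hw
        cases hw
    | succ p ih =>
      have hrw : st (p + 1) = (hstep (st p) ih).choose := by
        show (if h : Inv (st p) then (hstep (st p) h).choose else st p) = _
        rw [dif_pos ih]
      rw [hrw]
      exact (hstep (st p) ih).choose_spec.1
  have hRel : ∀ p, (st p).2.1 < (st (p+1)).2.1 ∧ (st (p+1)).2.1 ∈ (st p).1 ∧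
      (∀ x ∈ (st (p+1)).1, x ∈ (st p).1) ∧
      ∃ u, u ∈ S ∧ (st (p+1)).2.2 = u :: (st p).2.2 ∧
        ((k (st p).2.1 : ℤ) - (k (st (p+1)).2.1 : ℤ)) • u
          ≤ g (st (p+1)).2.1 - g (st p).2.1 ∧
        (dag F.D (g (st (p+1)).2.1)).coeff (d (st (p+1)).2.1)
          + ((k (st (p+1)).2.1 - k (st p).2.1 : ℕ) : K)
            * (dag F.D u).coeff (d (st (p+1)).2.1) ≠ 0 := by
    intro p
    have h := hInvAll p
    have hrw : st (p + 1) = (hstep (st p) h).choose := by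
      show (if h' : Inv (st p) then (hstep (st p) h').choose else st p) = _
      rw [dif_pos h]
    rw [hrw]
    exact (hstep (st p) h).choose_spec.2
  set Aseq : ℕ → ℕ := fun p => (st p).2.1 with hAseqDef
  choose hAlt hAmem hTsub u huS hws hchainU hneU using hRel
  have hA' : ∀ p, (st p).2.1 = Aseq p := fun _ => rfl
  simp only [hA'] at hAlt hAmem hTsub hws hchainU hneU
  have hAmono : StrictMono Aseq := strictMono_nat_of_lt_succ hAlt
  -- witnesses accumulate
  have hwsmem : ∀ p r, p < r → u p ∈ (st r).2.2 := by
    intro p r hpr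
    induction r with
    | zero => omega
    | succ r ih =>
      rcases Nat.lt_succ_iff_lt_or_eq.mp hpr with h | h
      · rw [hws r]
        exact List.mem_cons_of_mem _ (ih h)
      · subst h
        rw [hws p]
        exact List.mem_cons_self
  -- exclusion of old witnesses at later marked points
  have hexcl : ∀ p r, p + 1 < r → (dag F.D (u p)).coeff (d (Aseq r)) = 0 := by
    intro p r hpr
    have h1 : Aseq r ∈ (st (r-1)).1 := by
      have := hAmem (r-1)
      have hre : r - 1 + 1 = r := by omega
      rwa [hre] at this
    have h2 : u p ∈ (st (r-1)).2.2 := hwsmem p (r-1) (by omega)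
    exact (hInvAll (r-1)).2 _ h1 _ h2
  -- the exponent sequence
  set t : ℕ → Γ := fun p =>
    Nat.rec (0 : Γ) (fun p acc => acc + (k (Aseq (p+1)) - k (Aseq p)) • u p) p with htDef
  have ht0 : t 0 = 0 := rfl
  have htsucc : ∀ p, t (p+1) = t p + (k (Aseq (p+1)) - k (Aseq p)) • u p := fun _ => rfl
  set e : ℕ → Γ := fun p => g (Aseq p) + t p with heDef
  have heapp : ∀ p, e p = g (Aseq p) + t p := fun _ => rfl
  set y : ℕ → Γ := fun p => e p + d (Aseq p) with hyDef
  have hyapp : ∀ p, y p = e p + d (Aseq p) := fun _ => rfl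
  have hco : ∀ p, ((k (Aseq p) : ℤ) - (k (Aseq (p+1)) : ℤ)) • u p
      = -(((k (Aseq (p+1)) - k (Aseq p) : ℕ)) • u p) := by
    intro p
    have hlt := hk (hAmono (by omega : p < p + 1))
    rw [← natCast_zsmul, ← neg_zsmul]
    congr 1
    omega
  have hemono : Monotone e := by
    apply monotone_nat_of_le_succ
    intro p
    have h1 := hchainU p
    rw [hco p] at h1
    have hrw : e (p+1) = e p + ((g (Aseq (p+1)) - g (Aseq p))
        + (k (Aseq (p+1)) - k (Aseq p)) • u p) := by
      rw [heapp (p+1), heapp p, htsucc p]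
      abel
    rw [hrw]
    refine le_add_of_nonneg_right ?_
    calc (0 : Γ) = -((k (Aseq (p+1)) - k (Aseq p)) • u p)
          + (k (Aseq (p+1)) - k (Aseq p)) • u p := by abel
      _ ≤ (g (Aseq (p+1)) - g (Aseq p)) + (k (Aseq (p+1)) - k (Aseq p)) • u p :=
          add_le_add_left h1 _
  have hystrict : ∀ p, y (p+1) < y p := by
    intro p
    have hst := hstars (Aseq p) (Aseq (p+1)) (hAmono (by omega : p < p + 1)) (u p) (huS p)
    have h3 : (g (Aseq (p+1)) + d (Aseq (p+1))) - (g (Aseq p) + d (Aseq p))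
        < -(((k (Aseq (p+1)) - k (Aseq p) : ℕ)) • u p) := by
      have := not_le.mp hst
      rwa [hco p] at this
    have hexp : y (p+1) = y p + ((((g (Aseq (p+1)) + d (Aseq (p+1)))
        - (g (Aseq p) + d (Aseq p)))) + (k (Aseq (p+1)) - k (Aseq p)) • u p) := by
      rw [hyapp (p+1), hyapp p, heapp (p+1), heapp p, htsucc p]
      abel
    rw [hexp]
    have hneg : ((((g (Aseq (p+1)) + d (Aseq (p+1))) - (g (Aseq p) + d (Aseq p))))
        + (k (Aseq (p+1)) - k (Aseq p)) • u p) < 0 := by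
      calc _ < -(((k (Aseq (p+1)) - k (Aseq p) : ℕ)) • u p)
            + (k (Aseq (p+1)) - k (Aseq p)) • u p := add_lt_add_left h3 _
        _ = 0 := by abel
    have := add_lt_add_left hneg (y p)
    simpa using this
  have hyanti : StrictAnti y := strictAnti_nat_of_succ_lt hystrict
  -- older witness contributions vanish
  have htzero : ∀ p r, p + 1 ≤ r → (dag F.D (t p)).coeff (d (Aseq r)) = 0 := by
    intro p
    induction p with
    | zero =>
      intro r _
      rw [ht0, aux_dag_zero F, HahnSeries.coeff_zero]
    | succ p ih =>
      intro r hr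
      rw [htsucc, aux_dag_add, HahnSeries.coeff_add, ih r (by omega), zero_add,
        aux_dag_nsmul]
      rw [HahnSeries.coeff_nsmul]
      rw [Pi.smul_apply, hexcl p r (by omega), smul_zero]
  -- visibility of the marked points
  have hvis : ∀ p, (dag F.D (e p)).coeff (d (Aseq p)) ≠ 0 := by
    intro p
    cases p with
    | zero =>
      have hrw : e 0 = g (Aseq 0) := by
        rw [heapp 0, ht0, add_zero]
      rw [hrw]
      exact hβ (Aseq 0)
    | succ p =>
      have hrw : e (p+1) = g (Aseq (p+1)) + t p + (k (Aseq (p+1)) - k (Aseq p)) • u p := by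
        rw [heapp (p+1), htsucc p, add_assoc]
      rw [hrw, aux_dag_add, aux_dag_add, HahnSeries.coeff_add, HahnSeries.coeff_add,
        htzero p (p+1) le_rfl, add_zero, aux_dag_nsmul, HahnSeries.coeff_nsmul,
        Pi.smul_apply, nsmul_eq_mul]
      exact hneU p
  -- final contradiction via the dichotomy
  rcases aux_mono_dichot e hemono with ⟨σ, hσ, hconst⟩ | ⟨σ, hσ, hstr⟩
  · have hinf : {x : ℕ | (dag F.D (e (σ 0))).coeff (d x) ≠ 0}.Infinite := by
      apply aux_infinite_of_inj (fun n => Aseq (σ n))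
        ((hAmono.comp hσ).injective)
      intro n
      have := hvis (σ n)
      rwa [hconst n] at this
    exact hinf (hhits _)
  · have hPWO := aux_unionD_pwo F (V := Set.range fun n => e (σ n))
      (aux_isPWO_range_mono hstr.monotone)
    have hmem : ∀ n, y (σ n) ∈ ⋃ g' ∈ Set.range (fun n => e (σ n)),
        (F.D (mono K g')).support := by
      intro n
      simp only [Set.mem_iUnion]
      refine ⟨e (σ n), ⟨n, rfl⟩, ?_⟩
      rw [HahnSeries.mem_support]
      have hv := hvis (σ n)
      rw [aux_dag_coeff] at hv
      have hyeq : y (σ n) = d (Aseq (σ n)) + e (σ n) := by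
        rw [hyapp]
        abel
      rwa [hyeq]
    obtain ⟨i, j, hij, hle⟩ := hPWO.exists_lt (f := fun n => y (σ n)) hmem
    exact absurd hle (not_le.mpr (hyanti (hσ hij)))

end AuxCore

section AuxMain

variable {Γ : Type} [AddCommGroup Γ] [LinearOrder Γ] [IsOrderedAddMonoid Γ] {K : Type} [Field K] [LinearOrder K] [IsStrictOrderedRing K]

/-- The main Noetherianity lemma: the image support set of `X·∂̄` is well-based. -/
lemma aux_main (F : PreLogField Γ K) (S : Set Γ) (U : Set (Γ × ℕ)) (hU : CutWB S U) :
    CutWB S {q : Γ × ℕ | ∃ g k', q.2 = k' + 1 ∧ (g, k') ∈ U ∧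
      (F.D (mono K g)).coeff q.1 ≠ 0} := by
  intro f hf
  by_contra hbad
  push_neg at hbad
  choose g k' hfk hgU hco using hf
  obtain ⟨σ0, hσ0⟩ := (aux_cutWB_pwo hU).exists_monotone_subseq
    (f := fun n => (g n, k' n)) (fun n => hgU n)
  have hkm : Monotone fun n => k' (σ0 n) := by
    intro m n hmn
    rcases hσ0 m n hmn with heq | hlt
    · exact (congrArg Prod.snd heq).ge
    · rcases hlt with ⟨hk2, -⟩ | ⟨hk2, -⟩
      · exact hk2.ge
      · exact hk2.le
  rcases aux_mono_dichot _ hkm with ⟨τ, hτ, hconst⟩ | ⟨τ, hτ, hstr⟩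
  · -- constant level case
    have hρs : StrictMono fun n => σ0 (τ n) := fun m n hmn => σ0.strictMono (hτ hmn)
    set ρ : ℕ → ℕ := fun n => σ0 (τ n) with hρ
    have hlev : ∀ n, k' (ρ n) = k' (ρ 0) := hconst
    have hgm : Monotone fun n => g (ρ n) := by
      intro m n hmn
      rcases hσ0 (τ m) (τ n) (hτ.monotone hmn) with heq | hlt
      · exact (congrArg Prod.fst heq).ge
      · rcases hlt with ⟨-, hx⟩ | ⟨hk2, -⟩
        · exact hx.le
        · exact absurd hk2 (by
            rw [show k' (ρ m) = k' (ρ n) from (hlev m).trans (hlev n).symm]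
            exact lt_irrefl _)
    have hgoal : ∀ i j, i < j → ¬((f (ρ i)).1 ≤ (f (ρ j)).1) := by
      intro i j hij hle
      have hlev2 : (f (ρ j)).2 = (f (ρ i)).2 := by
        rw [hfk (ρ j), hfk (ρ i), hlev j, hlev i]
      rcases eq_or_lt_of_le hle with heq | hlt
      · exact (hbad (ρ i) (ρ j) (hρs hij)).1 (Prod.ext heq.symm hlev2)
      · exact (hbad (ρ i) (ρ j) (hρs hij)).2 (Or.inl ⟨hlev2, hlt⟩)
    rcases aux_mono_dichot _ hgm with ⟨τ2, hτ2, hgc⟩ | ⟨τ2, hτ2, hgs⟩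
    · have hmem : ∀ n, (f (ρ (τ2 n))).1 ∈ (F.D (mono K (g (ρ (τ2 0))))).support := by
        intro n
        rw [HahnSeries.mem_support]
        have h := hco (ρ (τ2 n))
        rwa [show g (ρ (τ2 n)) = g (ρ (τ2 0)) from hgc n] at h
      obtain ⟨i, j, hij, hle⟩ := (F.D (mono K (g (ρ (τ2 0))))).isPWO_support.exists_lt hmem
      exact hgoal (τ2 i) (τ2 j) (hτ2 hij) hle
    · have hPWO := aux_unionD_pwo F (V := Set.range fun n => g (ρ (τ2 n)))
        (aux_isPWO_range_mono hgs.monotone)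
      have hmem : ∀ n, (f (ρ (τ2 n))).1 ∈ ⋃ x ∈ Set.range (fun n => g (ρ (τ2 n))),
          (F.D (mono K x)).support := by
        intro n
        simp only [Set.mem_iUnion]
        exact ⟨g (ρ (τ2 n)), ⟨n, rfl⟩, (HahnSeries.mem_support _ _).mpr (hco (ρ (τ2 n)))⟩
      obtain ⟨i, j, hij, hle⟩ := hPWO.exists_lt hmem
      exact hgoal (τ2 i) (τ2 j) (hτ2 hij) hle
  · -- strictly increasing level case
    have hρs : StrictMono fun n => σ0 (τ n) := fun m n hmn => σ0.strictMono (hτ hmn)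
    set ρ : ℕ → ℕ := fun n => σ0 (τ n) with hρ
    have hks : StrictMono fun n => k' (ρ n) := hstr
    refine aux_core F S (fun n => g (ρ n)) (fun n => (f (ρ n)).1 - g (ρ n))
      (fun n => k' (ρ n)) hks ?_ ?_ ?_
    · intro n
      rw [← aux_supp_shift F]
      exact hco (ρ n)
    · intro m n hmn
      rcases hσ0 (τ m) (τ n) (hτ hmn).le with heq | hlt
      · exact absurd (congrArg Prod.snd heq) (ne_of_gt (hks hmn))
      · rcases hlt with ⟨hk2, -⟩ | ⟨-, u, huS, hu⟩
        · exact absurd hk2 (ne_of_gt (hks hmn))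
        · exact ⟨u, huS, hu⟩
    · intro m n hmn u huS hle
      refine (hbad (ρ m) (ρ n) (hρs hmn)).2 (Or.inr ⟨?_, u, huS, ?_⟩)
      · rw [hfk (ρ m), hfk (ρ n)]
        exact Nat.succ_lt_succ (hks hmn)
      · have hco2 : (((f (ρ m)).2 : ℤ) - ((f (ρ n)).2 : ℤ))
            = ((k' (ρ m) : ℤ) - (k' (ρ n) : ℤ)) := by
          rw [hfk (ρ m), hfk (ρ n)]
          push_cast
          ring
        rw [hco2]
        have hsimp : (g (ρ n) + ((f (ρ n)).1 - g (ρ n)))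
            - (g (ρ m) + ((f (ρ m)).1 - g (ρ m))) = (f (ρ n)).1 - (f (ρ m)).1 := by
          abel
        rwa [hsimp] at hle

end AuxMain

section AuxConj

variable {Γ : Type} [AddCommGroup Γ] [LinearOrder Γ] [IsOrderedAddMonoid Γ] {K : Type} [Field K] [LinearOrder K] [IsStrictOrderedRing K]

lemma aux_finsum_exists {α : Type} {f : α → K} (h : ∑ᶠ x, f x ≠ 0) : ∃ x, f x ≠ 0 := by
  by_contra hall
  push_neg at hall
  exact h (finsum_eq_zero_of_forall_eq_zero hall)

lemma aux_xd_zero (F : PreLogField Γ K) (P : Γ × ℕ → K) (x : Γ) :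
    XDbar F.D P (x, 0) = 0 := rfl

lemma aux_xd_succ (F : PreLogField Γ K) (P : Γ × ℕ → K) (x : Γ) (k : ℕ) :
    XDbar F.D P (x, k + 1) = ∑ᶠ gg : Γ, P (gg, k) * (F.D (mono K gg)).coeff x := rfl

lemma aux_xd_supp (F : PreLogField Γ K) {P : Γ × ℕ → K} {q : Γ × ℕ}
    (hq : XDbar F.D P q ≠ 0) :
    ∃ gg kk, q.2 = kk + 1 ∧ P (gg, kk) ≠ 0 ∧ (F.D (mono K gg)).coeff q.1 ≠ 0 := by
  obtain ⟨x, kq⟩ := q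
  cases kq with
  | zero => exact absurd (aux_xd_zero F P x) hq
  | succ k =>
    rw [aux_xd_succ] at hq
    obtain ⟨gg, hgg⟩ := aux_finsum_exists hq
    exact ⟨gg, k, rfl, left_ne_zero_of_mul hgg, right_ne_zero_of_mul hgg⟩

lemma aux_slice_of {S : Set Γ} {P : Γ × ℕ → K} (hP : CutWB S (Function.support P)) (k : ℕ) :
    {g : Γ | P (g, k) ≠ 0}.IsPWO :=
  aux_slice_pwo hP k

lemma aux_fin_term (F : PreLogField Γ K) {P : Γ × ℕ → K} {k : ℕ}
    (hsl : {g : Γ | P (g, k) ≠ 0}.IsPWO) (x : Γ) :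
    (Function.support fun gg => P (gg, k) * (F.D (mono K gg)).coeff x).Finite := by
  apply (aux_keyfin F hsl x).subset
  intro gg hg
  exact ⟨left_ne_zero_of_mul hg, right_ne_zero_of_mul hg⟩

lemma aux_conj1 (F : PreLogField Γ K) (S : Set Γ)
    (hG : ∀ g ∈ SdagInv F.D S, ∀ h ∈ (F.D (mono K g)).support, h ∈ SdagInv F.D S)
    (P : Γ × ℕ → K) (hP : InCutAlg S (SdagInv F.D S) P) :
    InCutAlg S (SdagInv F.D S) (XDbar F.D P) := by
  constructor
  · apply aux_cutWB_mono (aux_main F S (Function.support P) hP.1)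
    intro q hq
    obtain ⟨gg, kk, h1, h2, h3⟩ := aux_xd_supp F hq
    exact ⟨gg, kk, h1, h2, h3⟩
  · intro q hq
    obtain ⟨gg, kk, h1, h2, h3⟩ := aux_xd_supp F hq
    exact hG gg (hP.2 (gg, kk) h2) q.1 ((HahnSeries.mem_support _ _).mpr h3)

lemma aux_conj2 (F : PreLogField Γ K) (S : Set Γ) (P Q : Γ × ℕ → K)
    (hP : InCutAlg S (SdagInv F.D S) P) (hQ : InCutAlg S (SdagInv F.D S) Q) :
    XDbar F.D (P + Q) = XDbar F.D P + XDbar F.D Q := by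
  funext q
  obtain ⟨x, kq⟩ := q
  cases kq with
  | zero =>
    rw [Pi.add_apply, aux_xd_zero, aux_xd_zero, aux_xd_zero, add_zero]
  | succ k =>
    rw [Pi.add_apply, aux_xd_succ, aux_xd_succ, aux_xd_succ,
      ← finsum_add_distrib (aux_fin_term F (aux_slice_of hP.1 k) x)
        (aux_fin_term F (aux_slice_of hQ.1 k) x)]
    apply finsum_congr
    intro gg
    rw [Pi.add_apply, add_mul]

lemma aux_conj3 (F : PreLogField Γ K) (S : Set Γ) (c : K) (P : Γ × ℕ → K)
    (hP : InCutAlg S (SdagInv F.D S) P) :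
    XDbar F.D (c • P) = c • XDbar F.D P := by
  funext q
  obtain ⟨x, kq⟩ := q
  cases kq with
  | zero =>
    rw [Pi.smul_apply, aux_xd_zero, aux_xd_zero, smul_zero]
  | succ k =>
    rw [Pi.smul_apply, aux_xd_succ, aux_xd_succ, smul_eq_mul,
      mul_finsum' _ _ (aux_fin_term F (aux_slice_of hP.1 k) x)]
    apply finsum_congr
    intro gg
    rw [Pi.smul_apply, smul_eq_mul, mul_assoc]

lemma aux_conj6 (F : PreLogField Γ K) (S : Set Γ) (g : Γ) (hg : g ∈ SdagInv F.D S)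
    (hg0 : g ≠ 0) (k : ℕ) (h : Γ) (hh : h ∈ (F.D (mono K g)).support) :
    cutLT S (h, k + 1) (g, k) := by
  rcases hg with rfl | ⟨hne, hord⟩
  · exact absurd rfl hg0
  refine Or.inr ⟨Nat.lt_succ_self k, -(dag F.D g).order, hord, ?_⟩
  have h1 : (dag F.D g).order ≤ h - g := by
    apply HahnSeries.order_le_of_coeff_ne_zero
    rw [aux_dag_coeff, sub_add_cancel]
    exact (HahnSeries.mem_support _ _).mp hh
  show ((k : ℤ) - ((k + 1 : ℕ) : ℤ)) • (-(dag F.D g).order) ≤ h - g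
  have hco : ((k : ℤ) - ((k + 1 : ℕ) : ℤ)) = -1 := by push_cast; ring
  rw [hco, neg_zsmul, one_zsmul, neg_neg]
  exact h1

lemma aux_finsum_to_sum {α β : Type} (f : α → β → K) (s : Finset (α × β))
    (hs : ∀ a b, f a b ≠ 0 → (a, b) ∈ s) :
    ∑ᶠ a, ∑ᶠ b, f a b = ∑ p ∈ s, f p.1 p.2 := by
  classical
  have h1 : (Function.support fun a => ∑ᶠ b, f a b) ⊆ ↑(s.image Prod.fst) := by
    intro a ha
    have hex : ∃ b, f a b ≠ 0 := by
      by_contra hb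
      push_neg at hb
      exact ha (finsum_eq_zero_of_forall_eq_zero hb)
    obtain ⟨b, hb⟩ := hex
    exact Finset.mem_coe.mpr (Finset.mem_image.mpr ⟨(a, b), hs a b hb, rfl⟩)
  rw [finsum_eq_sum_of_support_subset _ h1]
  have h2 : ∀ a, ∑ᶠ b, f a b = ∑ p ∈ s.filter (fun p => p.1 = a), f p.1 p.2 := by
    intro a
    have hsub : (Function.support fun b => f a b)
        ⊆ ↑((s.filter (fun p => p.1 = a)).image Prod.snd) := by
      intro b hb
      exact Finset.mem_coe.mpr (Finset.mem_image.mpr ⟨(a, b),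
        Finset.mem_filter.mpr ⟨hs a b hb, rfl⟩, rfl⟩)
    rw [finsum_eq_sum_of_support_subset _ hsub, Finset.sum_image ?_]
    · apply Finset.sum_congr rfl
      intro p hp
      rw [(Finset.mem_filter.mp hp).2]
    · intro p hp q hq hpq
      exact Prod.ext ((Finset.mem_filter.mp hp).2.trans
        ((Finset.mem_filter.mp hq).2).symm) hpq
  calc ∑ a ∈ s.image Prod.fst, ∑ᶠ b, f a b
      = ∑ a ∈ s.image Prod.fst, ∑ p ∈ s.filter (fun p => p.1 = a), f p.1 p.2 :=
        Finset.sum_congr rfl (fun a _ => h2 a)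
    _ = ∑ p ∈ s, f p.1 p.2 :=
        Finset.sum_fiberwise_of_maps_to (fun p hp => Finset.mem_image_of_mem _ hp) _

lemma aux_finsum_swap {α β : Type} (f : α → β → K)
    (hfin : {p : α × β | f p.1 p.2 ≠ 0}.Finite) :
    ∑ᶠ a, ∑ᶠ b, f a b = ∑ᶠ b, ∑ᶠ a, f a b := by
  classical
  rw [aux_finsum_to_sum f hfin.toFinset (fun a b h => hfin.mem_toFinset.mpr h)]
  rw [aux_finsum_to_sum (fun b a => f a b) (hfin.toFinset.image Prod.swap)
    (fun b a h => Finset.mem_image.mpr ⟨(a, b), hfin.mem_toFinset.mpr h, rfl⟩)]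
  rw [Finset.sum_image (fun p _ q _ h => Prod.swap_injective h)]
  rfl

lemma aux_conj4 (F : PreLogField Γ K) (S : Set Γ) (ι : Type) (fam : ι → Γ × ℕ → K)
    (hfam : ∀ i, InCutAlg S (SdagInv F.D S) (fam i)) (hsum : CutSummable S fam) :
    CutSummable S (fun i => XDbar F.D (fam i)) ∧
      XDbar F.D (cutSum fam) = cutSum fun i => XDbar F.D (fam i) := by
  classical
  have hUn : CutWB S (⋃ i, Function.support (fam i)) := hsum.1
  have hslice : ∀ k, {g : Γ | ∃ i, fam i (g, k) ≠ 0}.IsPWO := by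
    intro k
    apply Set.IsPWO.mono (aux_slice_pwo hUn k)
    intro g hg
    obtain ⟨i, hi⟩ := hg
    exact Set.mem_iUnion.mpr ⟨i, hi⟩
  constructor
  · constructor
    · apply aux_cutWB_mono (aux_main F S (⋃ i, Function.support (fam i)) hUn)
      intro q hq
      obtain ⟨i, hqi⟩ := Set.mem_iUnion.mp hq
      obtain ⟨gg, kk, h1, h2, h3⟩ := aux_xd_supp F hqi
      exact ⟨gg, kk, h1, Set.mem_iUnion.mpr ⟨i, h2⟩, h3⟩
    · intro q
      by_contra hinf
      have hinf' : {i | XDbar F.D (fam i) q ≠ 0}.Infinite := hinf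
      obtain ⟨x, kq⟩ := q
      cases kq with
      | zero =>
        obtain ⟨i, hi⟩ := hinf'.nonempty
        exact hi (aux_xd_zero F (fam i) x)
      | succ k =>
        have hch : ∀ i, XDbar F.D (fam i) (x, k + 1) ≠ 0 →
            ∃ gg, fam i (gg, k) ≠ 0 ∧ (F.D (mono K gg)).coeff x ≠ 0 := by
          intro i hi
          obtain ⟨gg, kk, h1, h2, h3⟩ := aux_xd_supp F hi
          have hkk : kk = k := by omega
          subst hkk
          exact ⟨gg, h2, h3⟩
        set φ : ι → Γ := fun i =>
          if h : XDbar F.D (fam i) (x, k + 1) ≠ 0 then (hch i h).choose else 0 with hφdef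
        have hφ : ∀ i, XDbar F.D (fam i) (x, k + 1) ≠ 0 →
            fam i (φ i, k) ≠ 0 ∧ (F.D (mono K (φ i))).coeff x ≠ 0 := by
          intro i hi
          have : φ i = (hch i hi).choose := by rw [hφdef]; exact dif_pos hi
          rw [this]
          exact (hch i hi).choose_spec
        set V := {g | g ∈ {g : Γ | ∃ i, fam i (g, k) ≠ 0}
            ∧ (F.D (mono K g)).coeff x ≠ 0} with hVdef
        have hVfin : V.Finite := aux_keyfin F (hslice k) x
        have hsubUnion : {i | XDbar F.D (fam i) (x, k + 1) ≠ 0}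
            ⊆ ⋃ v ∈ V, {i | fam i (v, k) ≠ 0} := by
          intro i hi
          have h := hφ i hi
          exact Set.mem_biUnion (⟨⟨i, h.1⟩, h.2⟩ : φ i ∈ V) h.1
        exact hinf' ((hVfin.biUnion (fun v _ => hsum.2 (v, k))).subset hsubUnion)
  · funext q
    obtain ⟨x, kq⟩ := q
    cases kq with
    | zero =>
      rw [aux_xd_zero]
      exact (finsum_eq_zero_of_forall_eq_zero
        (fun i => aux_xd_zero F (fam i) x)).symm
    | succ k =>
      rw [aux_xd_succ]
      have hstep1 : ∀ gg : Γ, cutSum fam (gg, k) * (F.D (mono K gg)).coeff x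
          = ∑ᶠ i, fam i (gg, k) * (F.D (mono K gg)).coeff x := by
        intro gg
        exact finsum_mul' _ _ (hsum.2 (gg, k))
      rw [finsum_congr hstep1]
      rw [aux_finsum_swap (fun gg i => fam i (gg, k) * (F.D (mono K gg)).coeff x) ?_]
      · apply finsum_congr
        intro i
        exact (aux_xd_succ F (fam i) x k).symm
      · apply Set.Finite.subset (Set.Finite.biUnion (aux_keyfin F (hslice k) x)
          (fun v _ => ((hsum.2 (v, k)).image (fun i => (v, i)))))
        rintro ⟨gg, i⟩ hp
        have h1 : fam i (gg, k) ≠ 0 := left_ne_zero_of_mul hp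
        have h2 : (F.D (mono K gg)).coeff x ≠ 0 := right_ne_zero_of_mul hp
        exact Set.mem_biUnion (⟨⟨i, h1⟩, h2⟩ : gg ∈ {g | g ∈ {g : Γ | ∃ i, fam i (g, k) ≠ 0}
            ∧ (F.D (mono K g)).coeff x ≠ 0}) ⟨i, h1, rfl⟩

end AuxConj

section AuxConv

open scoped Pointwise

variable {Γ : Type} [AddCommGroup Γ] [LinearOrder Γ] [IsOrderedAddMonoid Γ] {K : Type} [Field K] [LinearOrder K] [IsStrictOrderedRing K]

lemma aux_fin_sub {A W : Set Γ} (hA : A.IsPWO) (hW : W.IsPWO) (x : Γ) :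
    {b | b ∈ A ∧ x - b ∈ W}.Finite := by
  by_contra hinf
  have hinf' : {b | b ∈ A ∧ x - b ∈ W}.Infinite := hinf
  obtain ⟨b, hbmono, hbmem⟩ := aux_pwo_strictmono
    (hA.mono (fun z (hz : z ∈ A ∧ x - z ∈ W) => hz.1)) hinf'
  obtain ⟨i, j, hij, hle⟩ := hW.exists_lt (f := fun n => x - b n) (fun n => (hbmem n).2)
  have hbj : b j ≤ b i := by
    have h := sub_le_sub_left hle x
    simpa using h
  exact absurd hbj (not_le.mpr (hbmono hij))

lemma aux_pairs_fin {A B : Set Γ} (hA : A.IsPWO) (hB : B.IsPWO) (c : Γ) :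
    {p : Γ × Γ | p.1 ∈ A ∧ p.2 ∈ B ∧ p.1 + p.2 = c}.Finite := by
  have hfst : {a | a ∈ A ∧ c - a ∈ B}.Finite := aux_fin_sub hA hB c
  apply Set.Finite.of_finite_image (f := Prod.fst) ?_ ?_
  · apply hfst.subset
    rintro a ⟨⟨a', b'⟩, ⟨h1, h2, h3⟩, rfl⟩
    refine ⟨h1, ?_⟩
    have : c - a' = b' := by rw [← h3]; abel
    rwa [this]
  · rintro ⟨a, b⟩ ⟨h1, h2, h3⟩ ⟨a', b'⟩ ⟨h1', h2', h3'⟩ hfst'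
    simp only at hfst'
    subst hfst'
    have hbb : b = b' := add_left_cancel (h3.trans h3'.symm)
    rw [hbb]

lemma aux_J1fin (F : PreLogField Γ K) {A B : Set Γ} (hA : A.IsPWO) (hB : B.IsPWO) (x : Γ) :
    {p : Γ × Γ | p.1 ∈ A ∧ p.2 ∈ B ∧ (F.D (mono K (p.1 + p.2))).coeff x ≠ 0}.Finite := by
  have hGf : {g | g ∈ A + B ∧ (F.D (mono K g)).coeff x ≠ 0}.Finite :=
    aux_keyfin F (hA.add hB) x
  apply Set.Finite.subset (Set.Finite.biUnion hGf (fun gsum _ => aux_pairs_fin hA hB gsum))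
  rintro ⟨a, b⟩ ⟨ha, hb, hc⟩
  exact Set.mem_biUnion (⟨Set.add_mem_add ha hb, hc⟩ :
    a + b ∈ {g | g ∈ A + B ∧ (F.D (mono K g)).coeff x ≠ 0}) ⟨ha, hb, rfl⟩

lemma aux_J2fin (F : PreLogField Γ K) {A B : Set Γ} (hA : A.IsPWO) (hB : B.IsPWO) (x : Γ) :
    {p : Γ × Γ | p.1 ∈ A ∧ p.2 ∈ B ∧ (F.D (mono K p.1)).coeff (x - p.2) ≠ 0}.Finite := by
  have hU : (⋃ a ∈ A, (F.D (mono K a)).support).IsPWO := aux_unionD_pwo F hA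
  have hBf : {b | b ∈ B ∧ x - b ∈ ⋃ a ∈ A, (F.D (mono K a)).support}.Finite :=
    aux_fin_sub hB hU x
  apply Set.Finite.subset (Set.Finite.biUnion hBf (fun b _ =>
    ((aux_keyfin F hA (x - b)).image (fun a => (a, b)))))
  rintro ⟨a, b⟩ ⟨ha, hb, hc⟩
  have hmem : x - b ∈ ⋃ a' ∈ A, (F.D (mono K a')).support := by
    simp only [Set.mem_iUnion]
    exact ⟨a, ha, (HahnSeries.mem_support _ _).mpr hc⟩
  exact Set.mem_biUnion (⟨hb, hmem⟩ :
    b ∈ {b | b ∈ B ∧ x - b ∈ ⋃ a' ∈ A, (F.D (mono K a')).support}) ⟨a, ⟨ha, hc⟩, rfl⟩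

lemma aux_lift_fin {C : ℕ → Set (Γ × Γ)} {k : ℕ} (hC : ∀ m, m ≤ k → (C m).Finite) :
    {pp : (Γ × ℕ) × (Γ × ℕ) | pp.1.2 + pp.2.2 = k ∧ (pp.1.1, pp.2.1) ∈ C pp.1.2}.Finite := by
  apply Set.Finite.subset (Set.Finite.biUnion (Set.finite_Iic k)
    (fun m (hm : m ∈ Set.Iic k) => ((hC m hm).image (fun p => ((p.1, m), (p.2, k - m))))))
  rintro ⟨⟨a, m⟩, ⟨b, j⟩⟩ ⟨hsum, hC'⟩
  simp only at hsum hC'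
  refine Set.mem_biUnion (show m ∈ Set.Iic k by simp; omega) ?_
  refine ⟨(a, b), hC', ?_⟩
  have : k - m = j := by omega
  rw [this]

lemma aux_J3fin (F : PreLogField Γ K) {A B : Set Γ} (hA : A.IsPWO) (hB : B.IsPWO) (x : Γ) :
    {p : Γ × Γ | p.1 ∈ A ∧ p.2 ∈ B ∧ (F.D (mono K p.2)).coeff (x - p.1) ≠ 0}.Finite := by
  apply ((aux_J2fin F hB hA x).image Prod.swap).subset
  rintro ⟨a, b⟩ ⟨h1, h2, h3⟩
  exact ⟨(b, a), ⟨h2, h1, h3⟩, rfl⟩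

lemma aux_xd_pt0 (F : PreLogField Γ K) (P : Γ × ℕ → K) (r : Γ × ℕ) (hr : r.2 = 0) :
    XDbar F.D P r = 0 := by
  obtain ⟨y, l⟩ := r
  simp only at hr
  subst hr
  rfl

lemma aux_xd_pt (F : PreLogField Γ K) (P : Γ × ℕ → K) (r : Γ × ℕ) (hr : r.2 ≠ 0) :
    XDbar F.D P r = ∑ᶠ aa : Γ, P (aa, r.2 - 1) * (F.D (mono K aa)).coeff r.1 := by
  obtain ⟨y, l⟩ := r
  cases l with
  | zero => exact absurd rfl hr
  | succ m => rfl

lemma aux_cc_def (P Q : Γ × ℕ → K) (q : Γ × ℕ) :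
    cutConv P Q q = ∑ᶠ pp : (Γ × ℕ) × (Γ × ℕ),
      if pp.1 + pp.2 = q then P pp.1 * Q pp.2 else 0 := by
  unfold cutConv
  exact finsum_congr (fun pp => finsum_eq_if)

lemma aux_cc_zero_left (A B : Γ × ℕ → K) (hA0 : ∀ r : Γ × ℕ, r.2 = 0 → A r = 0) (x : Γ) :
    cutConv A B (x, 0) = 0 := by
  rw [aux_cc_def]
  apply finsum_eq_zero_of_forall_eq_zero
  intro pp
  split_ifs with hc
  · have h2 : pp.1.2 = 0 := by
      have h := congrArg Prod.snd hc
      rw [Prod.snd_add] at h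
      omega
    rw [hA0 pp.1 h2, zero_mul]
  · rfl

lemma aux_cc_zero_right (A B : Γ × ℕ → K) (hB0 : ∀ r : Γ × ℕ, r.2 = 0 → B r = 0) (x : Γ) :
    cutConv A B (x, 0) = 0 := by
  rw [aux_cc_def]
  apply finsum_eq_zero_of_forall_eq_zero
  intro pp
  split_ifs with hc
  · have h2 : pp.2.2 = 0 := by
      have h := congrArg Prod.snd hc
      rw [Prod.snd_add] at h
      omega
    rw [hB0 pp.2 h2, mul_zero]
  · rfl

end AuxConv

section AuxConj5

variable {Γ : Type} [AddCommGroup Γ] [LinearOrder Γ] [IsOrderedAddMonoid Γ] {K : Type} [Field K] [LinearOrder K] [IsStrictOrderedRing K]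

lemma aux_conj5 (F : PreLogField Γ K) (S : Set Γ) (P Q : Γ × ℕ → K)
    (hP : InCutAlg S (SdagInv F.D S) P) (hQ : InCutAlg S (SdagInv F.D S) Q) :
    XDbar F.D (cutConv P Q) = cutConv (XDbar F.D P) Q + cutConv P (XDbar F.D Q) := by
  classical
  have hPsl : ∀ m, {g : Γ | P (g, m) ≠ 0}.IsPWO := fun m => aux_slice_of hP.1 m
  have hQsl : ∀ m, {g : Γ | Q (g, m) ≠ 0}.IsPWO := fun m => aux_slice_of hQ.1 m
  funext q
  obtain ⟨x, kq⟩ := q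
  cases kq with
  | zero =>
    rw [Pi.add_apply, aux_xd_zero,
      aux_cc_zero_left _ _ (fun r hr => aux_xd_pt0 F P r hr) x,
      aux_cc_zero_right _ _ (fun r hr => aux_xd_pt0 F Q r hr) x, add_zero]
  | succ k =>
    set T0 : (Γ × ℕ) × (Γ × ℕ) → K := fun pp =>
      if pp.1.2 + pp.2.2 = k then
        P pp.1 * Q pp.2 * (F.D (mono K (pp.1.1 + pp.2.1))).coeff x else 0 with hT0
    set T1 : (Γ × ℕ) × (Γ × ℕ) → K := fun pp =>
      if pp.1.2 + pp.2.2 = k then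
        P pp.1 * Q pp.2 * (F.D (mono K pp.1.1)).coeff (x - pp.2.1) else 0 with hT1
    set T2 : (Γ × ℕ) × (Γ × ℕ) → K := fun pp =>
      if pp.1.2 + pp.2.2 = k then
        P pp.1 * Q pp.2 * (F.D (mono K pp.2.1)).coeff (x - pp.1.1) else 0 with hT2
    -- basic facts about levels
    have hT0lev : ∀ pp, T0 pp ≠ 0 → pp.1.2 + pp.2.2 = k := by
      intro pp h
      by_contra hc
      exact h (by simp only [hT0]; rw [if_neg hc])
    have hT1lev : ∀ pp, T1 pp ≠ 0 → pp.1.2 + pp.2.2 = k := by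
      intro pp h
      by_contra hc
      exact h (by simp only [hT1]; rw [if_neg hc])
    have hT2lev : ∀ pp, T2 pp ≠ 0 → pp.1.2 + pp.2.2 = k := by
      intro pp h
      by_contra hc
      exact h (by simp only [hT2]; rw [if_neg hc])
    -- support finiteness
    have hT0fin : (Function.support T0).Finite := by
      apply Set.Finite.subset (aux_lift_fin (C := fun m =>
        {p : Γ × Γ | p.1 ∈ {g | P (g, m) ≠ 0} ∧ p.2 ∈ {g | Q (g, k - m) ≠ 0}
          ∧ (F.D (mono K (p.1 + p.2))).coeff x ≠ 0})
        (fun m _ => aux_J1fin F (hPsl m) (hQsl (k - m)) x))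
      intro pp hpp
      have hlev := hT0lev pp hpp
      have hval : P pp.1 * Q pp.2 * (F.D (mono K (pp.1.1 + pp.2.1))).coeff x ≠ 0 := by
        intro h0
        exact hpp (by simp only [hT0]; rw [if_pos hlev]; exact h0)
      refine ⟨hlev, ?_, ?_, ?_⟩
      · have := left_ne_zero_of_mul (left_ne_zero_of_mul hval)
        simpa [Prod.mk.eta] using this
      · have := right_ne_zero_of_mul (left_ne_zero_of_mul hval)
        have h2 : (pp.2.1, k - pp.1.2) = pp.2 := Prod.ext rfl (by simp; omega)
        show Q (pp.2.1, k - pp.1.2) ≠ 0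
        rw [h2]
        exact this
      · exact right_ne_zero_of_mul hval
    have hT1fin : (Function.support T1).Finite := by
      apply Set.Finite.subset (aux_lift_fin (C := fun m =>
        {p : Γ × Γ | p.1 ∈ {g | P (g, m) ≠ 0} ∧ p.2 ∈ {g | Q (g, k - m) ≠ 0}
          ∧ (F.D (mono K p.1)).coeff (x - p.2) ≠ 0})
        (fun m _ => aux_J2fin F (hPsl m) (hQsl (k - m)) x))
      intro pp hpp
      have hlev := hT1lev pp hpp
      have hval : P pp.1 * Q pp.2 * (F.D (mono K pp.1.1)).coeff (x - pp.2.1) ≠ 0 := by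
        intro h0
        exact hpp (by simp only [hT1]; rw [if_pos hlev]; exact h0)
      refine ⟨hlev, ?_, ?_, ?_⟩
      · have := left_ne_zero_of_mul (left_ne_zero_of_mul hval)
        simpa [Prod.mk.eta] using this
      · have := right_ne_zero_of_mul (left_ne_zero_of_mul hval)
        have h2 : (pp.2.1, k - pp.1.2) = pp.2 := Prod.ext rfl (by simp; omega)
        show Q (pp.2.1, k - pp.1.2) ≠ 0
        rw [h2]
        exact this
      · exact right_ne_zero_of_mul hval
    have hT2fin : (Function.support T2).Finite := by
      apply Set.Finite.subset (aux_lift_fin (C := fun m =>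
        {p : Γ × Γ | p.1 ∈ {g | P (g, m) ≠ 0} ∧ p.2 ∈ {g | Q (g, k - m) ≠ 0}
          ∧ (F.D (mono K p.2)).coeff (x - p.1) ≠ 0})
        (fun m _ => aux_J3fin F (hPsl m) (hQsl (k - m)) x))
      intro pp hpp
      have hlev := hT2lev pp hpp
      have hval : P pp.1 * Q pp.2 * (F.D (mono K pp.2.1)).coeff (x - pp.1.1) ≠ 0 := by
        intro h0
        exact hpp (by simp only [hT2]; rw [if_pos hlev]; exact h0)
      refine ⟨hlev, ?_, ?_, ?_⟩
      · have := left_ne_zero_of_mul (left_ne_zero_of_mul hval)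
        simpa [Prod.mk.eta] using this
      · have := right_ne_zero_of_mul (left_ne_zero_of_mul hval)
        have h2 : (pp.2.1, k - pp.1.2) = pp.2 := Prod.ext rfl (by simp; omega)
        show Q (pp.2.1, k - pp.1.2) ≠ 0
        rw [h2]
        exact this
      · exact right_ne_zero_of_mul hval
    -- Claim L
    have hL : XDbar F.D (cutConv P Q) (x, k + 1) = ∑ᶠ pp, T0 pp := by
      rw [aux_xd_succ]
      have hstepA : ∀ gg : Γ, cutConv P Q (gg, k) * (F.D (mono K gg)).coeff x
          = ∑ᶠ pp : (Γ × ℕ) × (Γ × ℕ),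
              (if pp.1 + pp.2 = (gg, k) then P pp.1 * Q pp.2 * (F.D (mono K gg)).coeff x
                else 0) := by
        intro gg
        have hfin : (Function.support fun pp : (Γ × ℕ) × (Γ × ℕ) =>
            if pp.1 + pp.2 = (gg, k) then P pp.1 * Q pp.2 else 0).Finite := by
          apply Set.Finite.subset (aux_lift_fin (C := fun m =>
            {p : Γ × Γ | p.1 ∈ {g | P (g, m) ≠ 0} ∧ p.2 ∈ {g | Q (g, k - m) ≠ 0}
              ∧ p.1 + p.2 = gg})
            (fun m _ => aux_pairs_fin (hPsl m) (hQsl (k - m)) gg))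
          intro pp hpp
          have hc : pp.1 + pp.2 = (gg, k) := by
            by_contra hc
            exact hpp (by beta_reduce; rw [if_neg hc])
          have hval : P pp.1 * Q pp.2 ≠ 0 := by
            intro h0
            exact hpp (by beta_reduce; rw [if_pos hc, h0])
          have hfstc : pp.1.1 + pp.2.1 = gg := by
            have h := congrArg Prod.fst hc; rwa [Prod.fst_add] at h
          have hlev : pp.1.2 + pp.2.2 = k := by
            have h := congrArg Prod.snd hc; rwa [Prod.snd_add] at h
          refine ⟨hlev, ?_, ?_, hfstc⟩
          · have h := left_ne_zero_of_mul hval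
            simpa [Prod.mk.eta] using h
          · have h := right_ne_zero_of_mul hval
            have h2 : (pp.2.1, k - pp.1.2) = pp.2 := Prod.ext rfl (by simp; omega)
            show Q (pp.2.1, k - pp.1.2) ≠ 0
            rw [h2]; exact h
        rw [aux_cc_def, finsum_mul' _ _ hfin]
        apply finsum_congr
        intro pp
        rw [ite_mul, zero_mul]
      rw [finsum_congr hstepA]
      have hUfin : ∀ (gg : Γ) (pp : (Γ × ℕ) × (Γ × ℕ)),
          (if pp.1 + pp.2 = (gg, k) then P pp.1 * Q pp.2 * (F.D (mono K gg)).coeff x else 0)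
            ≠ 0 →
          (gg, pp) ∈ hT0fin.toFinset.image (fun pp => (pp.1.1 + pp.2.1, pp)) := by
        intro gg pp hne
        have hc : pp.1 + pp.2 = (gg, k) := by
          by_contra hc
          exact hne (by beta_reduce; rw [if_neg hc])
        rw [if_pos hc] at hne
        have hfstc : pp.1.1 + pp.2.1 = gg := by
          have h := congrArg Prod.fst hc; rwa [Prod.fst_add] at h
        have hlev : pp.1.2 + pp.2.2 = k := by
          have h := congrArg Prod.snd hc; rwa [Prod.snd_add] at h
        have hT0ne : T0 pp ≠ 0 := by
          simp only [hT0]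
          rw [if_pos hlev, hfstc]
          exact hne
        exact Finset.mem_image.mpr ⟨pp, hT0fin.mem_toFinset.mpr hT0ne, by rw [hfstc]⟩
      rw [aux_finsum_to_sum _ _ hUfin]
      rw [Finset.sum_image (fun p _ q _ h => congrArg Prod.snd h)]
      rw [finsum_eq_sum_of_support_subset T0 (fun pp hpp =>
        Finset.mem_coe.mpr (hT0fin.mem_toFinset.mpr hpp))]
      apply Finset.sum_congr rfl
      intro pp hpp
      by_cases hc : pp.1.2 + pp.2.2 = k
      · have hcond : pp.1 + pp.2 = (pp.1.1 + pp.2.1, k) :=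
          Prod.ext (by rw [Prod.fst_add]) (by rw [Prod.snd_add]; exact hc)
        rw [if_pos hcond]
        simp only [hT0]
        rw [if_pos hc]
      · have hcond : ¬(pp.1 + pp.2 = (pp.1.1 + pp.2.1, k)) := by
          intro h
          exact hc (by have h2 := congrArg Prod.snd h; rwa [Prod.snd_add] at h2)
        rw [if_neg hcond]
        simp only [hT0]
        rw [if_neg hc]
    -- Claim R1
    have hR1 : cutConv (XDbar F.D P) Q (x, k + 1) = ∑ᶠ pp, T1 pp := by
      rw [aux_cc_def]
      have hstep : ∀ rr : (Γ × ℕ) × (Γ × ℕ),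
          (if rr.1 + rr.2 = (x, k + 1) then XDbar F.D P rr.1 * Q rr.2 else 0)
            = ∑ᶠ aa : Γ, (if rr.1 + rr.2 = (x, k + 1) ∧ rr.1.2 ≠ 0 then
                P (aa, rr.1.2 - 1) * (F.D (mono K aa)).coeff rr.1.1 * Q rr.2 else 0) := by
        intro rr
        by_cases hc : rr.1 + rr.2 = (x, k + 1)
        · by_cases h0 : rr.1.2 = 0
          · rw [if_pos hc, aux_xd_pt0 F P rr.1 h0, zero_mul]
            exact (finsum_eq_zero_of_forall_eq_zero fun aa =>
              if_neg (fun hand => hand.2 h0)).symm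
          · rw [if_pos hc, aux_xd_pt F P rr.1 h0,
              finsum_mul' _ _ (aux_fin_term F (hPsl (rr.1.2 - 1)) rr.1.1)]
            apply finsum_congr
            intro aa
            rw [if_pos ⟨hc, h0⟩]
        · rw [if_neg hc]
          exact (finsum_eq_zero_of_forall_eq_zero fun aa =>
            if_neg (fun hand => hc hand.1)).symm
      rw [finsum_congr hstep]
      have hWmem : ∀ (rr : (Γ × ℕ) × (Γ × ℕ)) (aa : Γ),
          (if rr.1 + rr.2 = (x, k + 1) ∧ rr.1.2 ≠ 0 then
            P (aa, rr.1.2 - 1) * (F.D (mono K aa)).coeff rr.1.1 * Q rr.2 else 0) ≠ 0 →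
          (rr, aa) ∈ hT1fin.toFinset.image
            (fun pp => (((x - pp.2.1, k + 1 - pp.2.2), pp.2), pp.1.1)) := by
        intro rr aa hne
        have hcond : rr.1 + rr.2 = (x, k + 1) ∧ rr.1.2 ≠ 0 := by
          by_contra hco
          exact hne (if_neg hco)
        rw [if_pos hcond] at hne
        have h' : rr.1.1 + rr.2.1 = x := by
          have h := congrArg Prod.fst hcond.1
          rwa [Prod.fst_add] at h
        have hx1 : rr.1.1 = x - rr.2.1 := by
          rw [← h']; abel
        have hk1 : rr.1.2 + rr.2.2 = k + 1 := by
          have h := congrArg Prod.snd hcond.1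
          rwa [Prod.snd_add] at h
        have hT1ne : T1 ((aa, rr.1.2 - 1), rr.2) ≠ 0 := by
          simp only [hT1]
          rw [if_pos (show ((aa, rr.1.2 - 1), rr.2).1.2 + ((aa, rr.1.2 - 1), rr.2).2.2 = k by
            simp only; omega)]
          beta_reduce
          intro h0
          apply hne
          calc P (aa, rr.1.2 - 1) * (F.D (mono K aa)).coeff rr.1.1 * Q rr.2
              = P (aa, rr.1.2 - 1) * Q rr.2 * (F.D (mono K aa)).coeff (x - rr.2.1) := by
                rw [hx1]; ring
            _ = 0 := h0
        refine Finset.mem_image.mpr ⟨((aa, rr.1.2 - 1), rr.2),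
          hT1fin.mem_toFinset.mpr hT1ne, ?_⟩
        simp only
        have h1 : x - rr.2.1 = rr.1.1 := hx1.symm
        have h2 : k + 1 - rr.2.2 = rr.1.2 := by omega
        rw [h1, h2, Prod.mk.eta]
      rw [aux_finsum_to_sum _ _ hWmem]
      rw [Finset.sum_image (fun p hp q hq h => by
        have hpl := hT1lev p (hT1fin.mem_toFinset.mp hp)
        have hql := hT1lev q (hT1fin.mem_toFinset.mp hq)
        have h2 : p.2 = q.2 := congrArg (fun z => z.1.2) h
        have h1 : p.1.1 = q.1.1 := congrArg Prod.snd h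
        have h22 : p.2.2 = q.2.2 := congrArg Prod.snd h2
        have h12 : p.1.2 = q.1.2 := by omega
        exact Prod.ext (Prod.ext h1 h12) h2)]
      rw [finsum_eq_sum_of_support_subset T1 (fun pp hpp =>
        Finset.mem_coe.mpr (hT1fin.mem_toFinset.mpr hpp))]
      apply Finset.sum_congr rfl
      intro pp hpp
      have hlev := hT1lev pp (hT1fin.mem_toFinset.mp hpp)
      have hcond : (((x - pp.2.1, k + 1 - pp.2.2), pp.2) :
            (Γ × ℕ) × (Γ × ℕ)).1 + ((x - pp.2.1, k + 1 - pp.2.2), pp.2).2 = (x, k + 1) ∧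
          (((x - pp.2.1, k + 1 - pp.2.2), pp.2) : (Γ × ℕ) × (Γ × ℕ)).1.2 ≠ 0 := by
        refine ⟨Prod.ext ?_ ?_, ?_⟩
        · show (x - pp.2.1) + pp.2.1 = x
          exact sub_add_cancel x pp.2.1
        · show (k + 1 - pp.2.2) + pp.2.2 = k + 1
          omega
        · show (k + 1 - pp.2.2 : ℕ) ≠ 0
          omega
      rw [if_pos hcond]
      simp only [hT1]
      rw [if_pos hlev]
      have harg : (k + 1 - pp.2.2) - 1 = pp.1.2 := by omega
      beta_reduce
      rw [harg, Prod.mk.eta]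
      ring
    -- Claim R2
    have hR2 : cutConv P (XDbar F.D Q) (x, k + 1) = ∑ᶠ pp, T2 pp := by
      rw [aux_cc_def]
      have hstep : ∀ rr : (Γ × ℕ) × (Γ × ℕ),
          (if rr.1 + rr.2 = (x, k + 1) then P rr.1 * XDbar F.D Q rr.2 else 0)
            = ∑ᶠ aa : Γ, (if rr.1 + rr.2 = (x, k + 1) ∧ rr.2.2 ≠ 0 then
                P rr.1 * (Q (aa, rr.2.2 - 1) * (F.D (mono K aa)).coeff rr.2.1) else 0) := by
        intro rr
        by_cases hc : rr.1 + rr.2 = (x, k + 1)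
        · by_cases h0 : rr.2.2 = 0
          · rw [if_pos hc, aux_xd_pt0 F Q rr.2 h0, mul_zero]
            exact (finsum_eq_zero_of_forall_eq_zero fun aa =>
              if_neg (fun hand => hand.2 h0)).symm
          · rw [if_pos hc, aux_xd_pt F Q rr.2 h0,
              mul_finsum' _ _ (aux_fin_term F (hQsl (rr.2.2 - 1)) rr.2.1)]
            apply finsum_congr
            intro aa
            rw [if_pos ⟨hc, h0⟩]
        · rw [if_neg hc]
          exact (finsum_eq_zero_of_forall_eq_zero fun aa =>
            if_neg (fun hand => hc hand.1)).symm
      rw [finsum_congr hstep]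
      have hWmem : ∀ (rr : (Γ × ℕ) × (Γ × ℕ)) (aa : Γ),
          (if rr.1 + rr.2 = (x, k + 1) ∧ rr.2.2 ≠ 0 then
            P rr.1 * (Q (aa, rr.2.2 - 1) * (F.D (mono K aa)).coeff rr.2.1) else 0) ≠ 0 →
          (rr, aa) ∈ hT2fin.toFinset.image
            (fun pp => ((pp.1, (x - pp.1.1, k + 1 - pp.1.2)), pp.2.1)) := by
        intro rr aa hne
        have hcond : rr.1 + rr.2 = (x, k + 1) ∧ rr.2.2 ≠ 0 := by
          by_contra hco
          exact hne (if_neg hco)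
        rw [if_pos hcond] at hne
        have h' : rr.1.1 + rr.2.1 = x := by
          have h := congrArg Prod.fst hcond.1
          rwa [Prod.fst_add] at h
        have hx1 : rr.2.1 = x - rr.1.1 := by
          rw [← h']; abel
        have hk1 : rr.1.2 + rr.2.2 = k + 1 := by
          have h := congrArg Prod.snd hcond.1
          rwa [Prod.snd_add] at h
        have hT2ne : T2 (rr.1, (aa, rr.2.2 - 1)) ≠ 0 := by
          simp only [hT2]
          rw [if_pos (show (rr.1, (aa, rr.2.2 - 1)).1.2 + (rr.1, (aa, rr.2.2 - 1)).2.2 = k by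
            simp only; omega)]
          beta_reduce
          intro h0
          apply hne
          calc P rr.1 * (Q (aa, rr.2.2 - 1) * (F.D (mono K aa)).coeff rr.2.1)
              = P rr.1 * Q (aa, rr.2.2 - 1) * (F.D (mono K aa)).coeff (x - rr.1.1) := by
                rw [hx1]; ring
            _ = 0 := h0
        refine Finset.mem_image.mpr ⟨(rr.1, (aa, rr.2.2 - 1)),
          hT2fin.mem_toFinset.mpr hT2ne, ?_⟩
        simp only
        have h1 : x - rr.1.1 = rr.2.1 := hx1.symm
        have h2 : k + 1 - rr.1.2 = rr.2.2 := by omega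
        rw [h1, h2, Prod.mk.eta]
      rw [aux_finsum_to_sum _ _ hWmem]
      rw [Finset.sum_image (fun p hp q hq h => by
        have hpl := hT2lev p (hT2fin.mem_toFinset.mp hp)
        have hql := hT2lev q (hT2fin.mem_toFinset.mp hq)
        have h1 : p.1 = q.1 := congrArg (fun z => z.1.1) h
        have h2 : p.2.1 = q.2.1 := congrArg Prod.snd h
        have h11 : p.1.2 = q.1.2 := congrArg Prod.snd h1
        have h22 : p.2.2 = q.2.2 := by omega
        exact Prod.ext h1 (Prod.ext h2 h22))]
      rw [finsum_eq_sum_of_support_subset T2 (fun pp hpp =>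
        Finset.mem_coe.mpr (hT2fin.mem_toFinset.mpr hpp))]
      apply Finset.sum_congr rfl
      intro pp hpp
      have hlev := hT2lev pp (hT2fin.mem_toFinset.mp hpp)
      have hcond : ((pp.1, (x - pp.1.1, k + 1 - pp.1.2)) :
            (Γ × ℕ) × (Γ × ℕ)).1 + (pp.1, (x - pp.1.1, k + 1 - pp.1.2)).2 = (x, k + 1) ∧
          ((pp.1, (x - pp.1.1, k + 1 - pp.1.2)) : (Γ × ℕ) × (Γ × ℕ)).2.2 ≠ 0 := by
        refine ⟨Prod.ext ?_ ?_, ?_⟩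
        · show pp.1.1 + (x - pp.1.1) = x
          abel
        · show pp.1.2 + (k + 1 - pp.1.2) = k + 1
          omega
        · show (k + 1 - pp.1.2 : ℕ) ≠ 0
          omega
      rw [if_pos hcond]
      simp only [hT2]
      rw [if_pos hlev]
      have harg : (k + 1 - pp.1.2) - 1 = pp.2.2 := by omega
      beta_reduce
      rw [harg, Prod.mk.eta]
      ring
    -- combine
    have hsplit : ∀ pp : (Γ × ℕ) × (Γ × ℕ), T0 pp = T1 pp + T2 pp := by
      intro pp
      simp only [hT0, hT1, hT2]
      split_ifs with hc
      · rw [aux_leib_coeff, mul_add]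
      · rw [add_zero]
    rw [Pi.add_apply, hL, hR1, hR2, finsum_congr hsplit]
    exact finsum_add_distrib hT1fin hT2fin

end AuxConj5

/-- **Proposition 4.9 (contracting derivation on the cut algebra).** With
`𝔖^{-‡} = {m : m = 1 ∨ 𝔡_{m†} ∈ 𝔖⁻¹}` and assuming `supp m' ⊆ 𝔖^{-‡}` for all
`m ∈ 𝔖^{-‡}`, the operator `X·∂̄` (strongly linear extension of `mX^k ↦ m'·X^{k+1}`,
realised coefficientwise on cut series) maps `𝕊_{[𝔖]}⟦X⟧_𝔖` into itself, is strongly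
linear, is a derivation, and is contracting: `qX^{k+1} ≺_𝔖 mX^k` for every
`m ∈ 𝔖^{-‡}∖{1}`, `k ∈ ℕ` and `q ∈ supp m'`. -/
theorem statement10 {Γ K : Type} [AddCommGroup Γ] [LinearOrder Γ] [IsOrderedAddMonoid Γ] [Field K] [LinearOrder K] [IsStrictOrderedRing K]
    (F : PreLogField Γ K) (S : Set Γ) (hS : FinalSeg S)
    (hG : ∀ g ∈ SdagInv F.D S, ∀ h ∈ (F.D (mono K g)).support, h ∈ SdagInv F.D S) :
    -- X·∂̄ maps the cut algebra 𝕊_{[𝔖]}⟦X⟧_𝔖 into itself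
    (∀ P : Γ × ℕ → K, InCutAlg S (SdagInv F.D S) P →
      InCutAlg S (SdagInv F.D S) (XDbar F.D P)) ∧
    -- it is additive and K-linear
    (∀ P Q : Γ × ℕ → K, InCutAlg S (SdagInv F.D S) P → InCutAlg S (SdagInv F.D S) Q →
      XDbar F.D (P + Q) = XDbar F.D P + XDbar F.D Q) ∧
    (∀ (c : K) (P : Γ × ℕ → K), InCutAlg S (SdagInv F.D S) P →
      XDbar F.D (c • P) = c • XDbar F.D P) ∧
    -- it is strongly linear
    (∀ (ι : Type) (fam : ι → Γ × ℕ → K), (∀ i, InCutAlg S (SdagInv F.D S) (fam i)) →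
      CutSummable S fam →
        CutSummable S (fun i => XDbar F.D (fam i)) ∧
        XDbar F.D (cutSum fam) = cutSum fun i => XDbar F.D (fam i)) ∧
    -- it is a derivation
    (∀ P Q : Γ × ℕ → K, InCutAlg S (SdagInv F.D S) P → InCutAlg S (SdagInv F.D S) Q →
      XDbar F.D (cutConv P Q) = cutConv (XDbar F.D P) Q + cutConv P (XDbar F.D Q)) ∧
    -- it is contracting
    (∀ g ∈ SdagInv F.D S, g ≠ 0 → ∀ k : ℕ, ∀ h ∈ (F.D (mono K g)).support,
      cutLT S (h, k + 1) (g, k)) := by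
  exact ⟨fun P hP => aux_conj1 F S hG P hP,
    fun P Q hP hQ => aux_conj2 F S P Q hP hQ,
    fun c P hP => aux_conj3 F S c P hP,
    fun ι fam hfam hsum => aux_conj4 F S ι fam hfam hsum,
    fun P Q hP hQ => aux_conj5 F S P Q hP hQ,
    fun g hg hg0 k h hh => aux_conj6 F S g hg hg0 k h hh⟩
end Art
end
end

section
/- Let 𝔐 be a multiplicatively written linearly ordered abelian group and let 𝔖 be a final segment of (𝔐,≺). In the direct product group 𝔐·X^ℤ = {mX^k : m ∈ 𝔐, k ∈ ℤ}, the subset (𝔐×X^ℤ)^{≺,𝔖} := {mX^0 : m ≺ 1} ∪ {mX^k : k > 0 and ∃u ∈ 𝔖 with m ≼ u^{-k}} is a strictly positive cone: it does not contain the identity 1·X^0, it is closed under products, and it is disjoint from the set of inverses of its elements. -/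
open HahnSeries
open scoped Classical

noncomputable section

namespace Art

/-- **Lemma 3.1 (positive cone).** For a final segment `𝔖` of a linearly ordered abelian
group `(𝔐,≺)`, the set `(𝔐×X^ℤ)^{≺,𝔖} = {mX^0 : m ≺ 1} ∪ {mX^k : k > 0 ∧ ∃u ∈ 𝔖, m ≼ u^{-k}}`
is a strictly positive cone on `𝔐·X^ℤ`: it avoids the identity, is closed under products,
and is disjoint from its set of inverses. -/
theorem statement12 {Γ : Type} [AddCommGroup Γ] [LinearOrder Γ] [IsOrderedAddMonoid Γ]
    (S : Set Γ) (hS : FinalSeg S) :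
    (0 : Γ × ℤ) ∉ cutCone S ∧
    (∀ p q : Γ × ℤ, p ∈ cutCone S → q ∈ cutCone S → p + q ∈ cutCone S) ∧
    (∀ p : Γ × ℤ, p ∈ cutCone S → -p ∉ cutCone S) := by
  refine ⟨?_, ?_, ?_⟩
  · rintro (⟨-, h⟩ | ⟨h, -⟩) <;> exact lt_irrefl 0 h
  · rintro ⟨a, k⟩ ⟨b, l⟩ hp hq
    simp only [cutCone, Set.mem_setOf_eq, Prod.fst_add, Prod.snd_add] at hp hq ⊢
    obtain (⟨hk, ha⟩ | ⟨hk, u, hu, hau⟩) := hp <;>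
      obtain (⟨hl, hb⟩ | ⟨hl, v, hv, hbv⟩) := hq
    · exact Or.inl ⟨by omega, add_pos ha hb⟩
    · refine Or.inr ⟨by omega, v, hv, ?_⟩
      rw [hk, zero_add]
      exact hbv.trans (le_add_of_nonneg_left ha.le)
    · refine Or.inr ⟨by omega, u, hu, ?_⟩
      rw [hl, add_zero]
      exact hau.trans (le_add_of_nonneg_right hb.le)
    · refine Or.inr ⟨by omega, max u v,
        (max_choice u v).elim (fun h => h.symm ▸ hu) (fun h => h.symm ▸ hv), ?_⟩
      have h1 : (-k) • max u v ≤ (-k) • u := by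
        rw [neg_zsmul, neg_zsmul]
        exact neg_le_neg (zsmul_le_zsmul_right hk.le (le_max_left u v))
      have h2 : (-l) • max u v ≤ (-l) • v := by
        rw [neg_zsmul, neg_zsmul]
        exact neg_le_neg (zsmul_le_zsmul_right hl.le (le_max_right u v))
      calc (-(k + l)) • max u v = (-k) • max u v + (-l) • max u v := by
            rw [← add_zsmul]; ring_nf
        _ ≤ a + b := add_le_add (h1.trans hau) (h2.trans hbv)
  · rintro ⟨a, k⟩ hp hq
    simp only [cutCone, Set.mem_setOf_eq, Prod.fst_neg, Prod.snd_neg] at hp hq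
    obtain (⟨hk, ha⟩ | ⟨hk, -⟩) := hp <;> obtain (⟨hk', ha'⟩ | ⟨hk', -⟩) := hq
    · exact absurd ha' (by simpa using ha.le)
    · omega
    · omega
    · omega
end Art
end
end

section
/- Let K be a field, 𝔐 a multiplicatively written linearly ordered abelian group, 𝕊 = K⟦𝔐⟧, and let 𝔖 and 𝔗 be final segments of (𝔐,≺). Then 𝔖 ⊊ 𝔗 if and only if 𝕊⟦X⟧_𝔖 ⊊ 𝕊⟦X⟧_𝔗, where both cut algebras are regarded as subsets of the power series ring 𝕊⟦X⟧: a power series P = Σ_k P_k X^k lies in 𝕊⟦X⟧_𝔖 iff its total support {mX^k : m ∈ supp P_k, k ∈ ℕ} ⊆ 𝔐·X^ℕ is partially well-ordered for the reverse order ≻_𝔖. -/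
open HahnSeries
open scoped Classical

noncomputable section

namespace Art

section Proof13

variable {Γ : Type} [AddCommGroup Γ] [LinearOrder Γ] [IsOrderedAddMonoid Γ] {K : Type} [Field K]

private lemma cutLT_mono' {S T : Set Γ} (hST : S ⊆ T) {p q : Γ × ℕ} (h : cutLT S p q) :
    cutLT T p q := by
  rcases h with h | ⟨h1, u, hu, h2⟩
  · exact Or.inl h
  · exact Or.inr ⟨h1, u, hST hu, h2⟩

private lemma inCut_mono' {S T : Set Γ} (hST : S ⊆ T) {P : ℕ → HahnSeries Γ K}
    (h : InCut S P) : InCut T P := by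
  intro f hf
  obtain ⟨i, j, hij, hc⟩ := h f hf
  exact ⟨i, j, hij, hc.imp id (cutLT_mono' hST)⟩

/-- witness series -/
private def wit (K : Type) [Field K] (u : Γ) : ℕ → HahnSeries Γ K :=
  fun k => HahnSeries.single ((-(k : ℤ)) • u) 1

private lemma wit_support (u : Γ) (k : ℕ) :
    (wit K u k).support = {(-(k : ℤ)) • u} := by
  simpa [wit] using HahnSeries.support_single_of_ne (one_ne_zero (α := K))

private lemma key_arith {i j : ℕ} (hij : i < j) {u v : Γ}
    (h : ((i : ℤ) - (j : ℤ)) • v ≤ (-(j : ℤ)) • u - (-(i : ℤ)) • u) : u ≤ v := by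
  have hn : (0 : ℤ) < (j : ℤ) - i := by omega
  have h2 : ((i : ℤ) - (j : ℤ)) • v ≤ ((i : ℤ) - (j : ℤ)) • u := by
    have : (-(j : ℤ)) • u - (-(i : ℤ)) • u = ((i : ℤ) - (j : ℤ)) • u := by
      rw [sub_zsmul, neg_zsmul, neg_zsmul]; abel
    rwa [this] at h
  have h3 : ((j : ℤ) - i) • u ≤ ((j : ℤ) - i) • v := by
    have := neg_le_neg h2
    rwa [← neg_zsmul, ← neg_zsmul, neg_sub] at this
  exact (zsmul_le_zsmul_iff_right hn).mp h3

private lemma wit_inCut {S : Set Γ} (u : Γ) (hu : u ∈ S) : InCut S (wit K u) := by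
  intro f hf
  have hfst : ∀ n, (f n).1 = (-((f n).2 : ℤ)) • u := by
    intro n
    have := hf n
    rw [Set.mem_setOf_eq, wit_support, Set.mem_singleton_iff] at this
    exact this
  have hex : ∃ m, ∃ n, (f n).2 = m := ⟨(f 0).2, 0, rfl⟩
  obtain ⟨i, hi⟩ := Nat.find_spec hex
  have hle : (f i).2 ≤ (f (i + 1)).2 := hi ▸ Nat.find_min' hex ⟨i + 1, rfl⟩
  refine ⟨i, i + 1, lt_add_one i, ?_⟩
  rcases eq_or_lt_of_le hle with heq | hlt
  · left
    have h1 : (f (i+1)).1 = (f i).1 := by rw [hfst, hfst, ← heq]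
    exact Prod.ext h1 heq.symm
  · right; right
    refine ⟨hlt, u, hu, ?_⟩
    rw [hfst, hfst]
    have : (-((f (i+1)).2 : ℤ)) • u - (-((f i).2 : ℤ)) • u
        = (((f i).2 : ℤ) - ((f (i+1)).2 : ℤ)) • u := by
      rw [sub_zsmul, neg_zsmul, neg_zsmul]; abel
    rw [this]

private lemma wit_not_inCut {S : Set Γ} (hS : FinalSeg S) (u : Γ) (hu : u ∉ S) :
    ¬ InCut S (wit K u) := by
  intro hcon
  obtain ⟨i, j, hij, hc⟩ := hcon (fun n => ((-(n : ℤ)) • u, n))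
    (fun n => by rw [Set.mem_setOf_eq, wit_support]; rfl)
  rcases hc with he | (⟨h1, _⟩ | ⟨_, v, hv, h2⟩)
  · exact hij.ne' (congrArg Prod.snd he)
  · exact hij.ne' h1
  · exact hu (hS hv (key_arith hij h2))

end Proof13


/-- **Lemma 3.4 (cut algebras are increasing in the cut).** For final segments `𝔖, 𝔗` of
`(𝔐,≺)`: `𝔖 ⊊ 𝔗` iff `𝕊⟦X⟧_𝔖 ⊊ 𝕊⟦X⟧_𝔗` (as sets of power series over `𝕊`, membership in
`𝕊⟦X⟧_𝔖` meaning that the total support is partially well-ordered for `≻_𝔖`). -/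
theorem statement13 {Γ K : Type} [AddCommGroup Γ] [LinearOrder Γ] [IsOrderedAddMonoid Γ] [Field K]
    (S T : Set Γ) (hS : FinalSeg S) (hT : FinalSeg T) :
    S ⊂ T ↔
      {P : ℕ → HahnSeries Γ K | InCut S P} ⊂ {P : ℕ → HahnSeries Γ K | InCut T P} := by
  constructor
  · intro hST
    obtain ⟨u, huT, huS⟩ := Set.exists_of_ssubset hST
    constructor
    · intro P hP
      exact inCut_mono' hST.1 hP
    · intro hcon
      exact wit_not_inCut hS u huS (hcon (wit_inCut (K := K) u huT))
  · intro h
    constructor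
    · intro u hu
      by_contra huT
      exact wit_not_inCut hT u huT (h.1 (wit_inCut (K := K) u hu))
    · intro hTS
      exact h.2 fun P hP => inCut_mono' hTS hP
end Art
end
end
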